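/- arXiv:1605.08326 — 4 statements merged into one kernel-verified Lean document; each statement's English description precedes it below -/
import Mathlib

section
/- Let n ≥ 2 and let u ∈ C¹(R^n_+, C^M) be such that C_u := sup over (x',t) ∈ R^n_+ of t·|∇u(x',t)| is finite. Then for every (x',t) and (y',t) in R^n_+ one has |u(x',t) − u(y',t)| ≤ 2·C_u·Υ_#(|x'−y'|/t). -/
open MeasureTheory Filter Topology ENNReal

noncomputable section

/-- `ℝ^d` with the Euclidean norm. -/
abbrev Edge (d : ℕ) := EuclideanSpace ℝ (Fin d)

/-- `ℂ^M` with the Euclidean (Hermitian) norm. -/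
abbrev Vec (M : ℕ) := EuclideanSpace ℂ (Fin M)

/-- The (closed) axis-parallel cube in `ℝ^d` with center `c` and side-length `ℓ`. -/
def cube {d : ℕ} (c : Edge d) (ℓ : ℝ) : Set (Edge d) :=
  {x | ∀ i, |x i - c i| ≤ ℓ / 2}

/-- The average `f_Q` of `f` over the cube with center `c` and side-length `ℓ`
(such a cube has Lebesgue measure `ℓ ^ d`). -/
def cubeAvg {d : ℕ} {V : Type*} [NormedAddCommGroup V] [NormedSpace ℝ V]
    (f : Edge d → V) (c : Edge d) (ℓ : ℝ) : V :=
  (ℓ ^ d)⁻¹ • ∫ x in cube c ℓ, f x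

/-- The mean oscillation `(1/|Q|) ∫_Q ‖f - f_Q‖` over the cube with center `c` and
side-length `ℓ`, valued in `ℝ≥0∞`. -/
def meanOsc {d : ℕ} {V : Type*} [NormedAddCommGroup V] [NormedSpace ℝ V]
    (f : Edge d → V) (c : Edge d) (ℓ : ℝ) : ℝ≥0∞ :=
  (ENNReal.ofReal (ℓ ^ d))⁻¹ * ∫⁻ x in cube c ℓ, (‖f x - cubeAvg f c ℓ‖₊ : ℝ≥0∞)

/-- The BMO seminorm `sup_Q (1/|Q|) ∫_Q ‖f - f_Q‖`, valued in `ℝ≥0∞`. -/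
def bmoSeminorm {d : ℕ} {V : Type*} [NormedAddCommGroup V] [NormedSpace ℝ V]
    (f : Edge d → V) : ℝ≥0∞ :=
  ⨆ (c : Edge d) (ℓ : {r : ℝ // 0 < r}), meanOsc f c ℓ.1

/-- `osc₁(f; r)`: the supremum of the mean oscillations of `f` over all cubes of
side-length at most `r`. -/
def osc1 {d : ℕ} {V : Type*} [NormedAddCommGroup V] [NormedSpace ℝ V]
    (f : Edge d → V) (r : ℝ) : ℝ≥0∞ :=
  ⨆ (c : Edge d) (ℓ : {s : ℝ // 0 < s ∧ s ≤ r}), meanOsc f c ℓ.1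

/-- Membership in `BMO`: locally integrable with finite BMO seminorm. -/
def MemBMO {d : ℕ} {V : Type*} [NormedAddCommGroup V] [NormedSpace ℝ V]
    (f : Edge d → V) : Prop :=
  LocallyIntegrable f volume ∧ bmoSeminorm f < ⊤

/-- Membership in Sarason's space `VMO`: in `BMO`, with mean oscillations over small
cubes tending to `0` uniformly as the side-length shrinks to `0`. -/
def MemVMO {d : ℕ} {V : Type*} [NormedAddCommGroup V] [NormedSpace ℝ V]
    (f : Edge d → V) : Prop :=
  MemBMO f ∧ Tendsto (fun r : ℝ => osc1 f r) (𝓝[>] 0) (𝓝 0)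

/-- The (closed) upperHS half-space model: pairs `(x', t)` with `x' ∈ ℝ^d`, `t ∈ ℝ`. -/
abbrev Half (d : ℕ) := Edge d × ℝ

/-- The open upperHS half-space `ℝ^{d+1}_+`. -/
def upperHS (d : ℕ) : Set (Half d) := {p | 0 < p.2}

/-- The nontangential cone `Γ_κ(x')` with aperture `κ` and vertex `x'`. -/
def ntCone {d : ℕ} (κ : ℝ) (x : Edge d) : Set (Half d) :=
  {p | 0 < p.2 ∧ dist x p.1 < κ * p.2}

/-- `u` has nontangential boundary trace `f` at a.e. boundary point, for every
aperture `κ > 0`. -/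
def NTtrace {d M : ℕ} (u : Half d → Vec M) (f : Edge d → Vec M) : Prop :=
  ∀ᵐ x : Edge d ∂volume, ∀ κ : ℝ, 0 < κ →
    Tendsto u (𝓝[ntCone κ x] (x, 0)) (𝓝 (f x))

/-- The quantity `(1/|Q|) ∫_0^{ℓ(Q)} ∫_Q ‖∇u(x',t)‖² t dx' dt` over the Carleson box
of the cube with center `c` and side-length `ℓ`. -/
def carlesonSq {d M : ℕ} (u : Half d → Vec M) (c : Edge d) (ℓ : ℝ) : ℝ≥0∞ :=
  (ENNReal.ofReal (ℓ ^ d))⁻¹ *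
    ∫⁻ p in cube c ℓ ×ˢ Set.Ioo (0 : ℝ) ℓ,
      (‖fderiv ℝ u p‖₊ : ℝ≥0∞) ^ 2 * ENNReal.ofReal p.2

/-- The Littlewood–Paley Carleson seminorm `‖u‖_{**}`, valued in `ℝ≥0∞`. -/
def starStar {d M : ℕ} (u : Half d → Vec M) : ℝ≥0∞ :=
  ⨆ (c : Edge d) (ℓ : {r : ℝ // 0 < r}), carlesonSq u c ℓ.1 ^ (1 / 2 : ℝ)

/-- `|∇u(x',t)|² t dx'dt` is a vanishing Carleson measure in the upperHS half-space. -/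
def VanishingCarleson {d M : ℕ} (u : Half d → Vec M) : Prop :=
  starStar u < ⊤ ∧
    Tendsto
      (fun r : ℝ => ⨆ (c : Edge d) (ℓ : {s : ℝ // 0 < s ∧ s ≤ r}), carlesonSq u c ℓ.1)
      (𝓝[>] 0) (𝓝 0)

/-- The function `Υ_#`: `Υ_#(s) = s` for `s ≤ 1` and `Υ_#(s) = 1 + log s` for `s > 1`. -/
def Ups (s : ℝ) : ℝ := if s ≤ 1 then s else 1 + Real.log s

lemma upperHS_isOpen (d : ℕ) : IsOpen (upperHS d) :=
  isOpen_lt continuous_const continuous_snd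

lemma aux_diffAt {d M : ℕ} {u : Half d → Vec M}
    (hu : ContDiffOn ℝ 1 u (upperHS d)) {p : Half d} (hp : p ∈ upperHS d) :
    DifferentiableAt ℝ u p :=
  (hu.contDiffAt ((upperHS_isOpen d).mem_nhds hp)).differentiableAt one_ne_zero

/-- Horizontal estimate. -/
lemma aux_horiz {d M : ℕ} {u : Half d → Vec M}
    (hu : ContDiffOn ℝ 1 u (upperHS d)) {Cu : ℝ}
    (hCu : ∀ p ∈ upperHS d, p.2 * ‖fderiv ℝ u p‖ ≤ Cu)
    (x y : Edge d) {h : ℝ} (hh : 0 < h) :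
    ‖u (x, h) - u (y, h)‖ ≤ Cu / h * dist x y := by
  set S : Set (Half d) := Set.univ ×ˢ {h} with hS
  have hSsub : ∀ p ∈ S, p ∈ upperHS d := by
    rintro ⟨a, b⟩ ⟨-, hb⟩
    simp only [Set.mem_singleton_iff] at hb
    simpa [upperHS, hb] using hh
  have hconv : Convex ℝ S := convex_univ.prod (convex_singleton h)
  have hxS : ((x, h) : Half d) ∈ S := ⟨Set.mem_univ _, rfl⟩
  have hyS : ((y, h) : Half d) ∈ S := ⟨Set.mem_univ _, rfl⟩
  have hbound : ∀ p ∈ S, ‖fderiv ℝ u p‖ ≤ Cu / h := by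
    rintro ⟨a, b⟩ hp
    have hb : b = h := hp.2
    have := hCu (a, b) (hSsub _ hp)
    rw [le_div_iff₀ hh]
    calc ‖fderiv ℝ u (a, b)‖ * h = b * ‖fderiv ℝ u (a, b)‖ := by rw [hb]; ring
      _ ≤ Cu := this
  have := hconv.norm_image_sub_le_of_norm_fderiv_le
    (fun p hp => aux_diffAt hu (hSsub p hp)) hbound hyS hxS
  calc ‖u (x, h) - u (y, h)‖ ≤ Cu / h * ‖((x, h) : Half d) - (y, h)‖ := this
    _ = Cu / h * dist x y := by
        rw [Prod.mk_sub_mk, sub_self, Prod.norm_def]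
        simp [dist_eq_norm]

/-- Vertical estimate. -/
lemma aux_vert {d M : ℕ} {u : Half d → Vec M}
    (hu : ContDiffOn ℝ 1 u (upperHS d)) {Cu : ℝ}
    (hCu : ∀ p ∈ upperHS d, p.2 * ‖fderiv ℝ u p‖ ≤ Cu)
    (x : Edge d) {t T : ℝ} (ht : 0 < t) (htT : t ≤ T) :
    ‖u (x, T) - u (x, t)‖ ≤ Cu * Real.log (T / t) := by
  have hT : 0 < T := lt_of_lt_of_le ht htT
  have hmem : ∀ τ ∈ Set.Icc t T, ((x, τ) : Half d) ∈ upperHS d := by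
    intro τ hτ
    exact lt_of_lt_of_le ht hτ.1
  set D : ℝ → Vec M := fun τ => fderiv ℝ u (x, τ) ((0 : Edge d), (1 : ℝ)) with hD
  have hderiv : ∀ τ ∈ Set.uIcc t T, HasDerivAt (fun τ => u (x, τ)) (D τ) τ := by
    intro τ hτ
    rw [Set.uIcc_of_le htT] at hτ
    have h1 : HasDerivAt (fun τ : ℝ => ((x, τ) : Half d)) ((0 : Edge d), (1 : ℝ)) τ :=
      (hasDerivAt_const τ x).prodMk (hasDerivAt_id τ)
    exact ((aux_diffAt hu (hmem τ hτ)).hasFDerivAt).comp_hasDerivAt τ h1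
  have hfc : ContinuousOn (fun p => fderiv ℝ u p) (upperHS d) :=
    hu.continuousOn_fderiv_of_isOpen (upperHS_isOpen d) le_rfl
  have hDc : ContinuousOn D (Set.Icc t T) := by
    have hc : ContinuousOn (fun τ : ℝ => ((x, τ) : Half d)) (Set.Icc t T) :=
      (continuous_const.prodMk continuous_id).continuousOn
    exact ((hfc.comp hc hmem).clm_apply continuousOn_const)
  have hDi : IntervalIntegrable D MeasureTheory.volume t T :=
    (hDc.mono (by rw [Set.uIcc_of_le htT])).intervalIntegrable
  have hftc : ∫ τ in t..T, D τ = u (x, T) - u (x, t) :=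
    intervalIntegral.integral_eq_sub_of_hasDerivAt hderiv hDi
  have hnz : (0 : ℝ) ∉ Set.uIcc t T := by
    rw [Set.uIcc_of_le htT]
    intro h0
    exact absurd h0.1 (not_le.mpr ht)
  have hgc : ContinuousOn (fun τ : ℝ => Cu / τ) (Set.uIcc t T) := by
    apply ContinuousOn.div continuousOn_const continuousOn_id
    intro τ hτ h0
    exact hnz (h0 ▸ hτ)
  have hgi : IntervalIntegrable (fun τ : ℝ => Cu / τ) MeasureTheory.volume t T :=
    hgc.intervalIntegrable
  have hnorm : ∀ τ ∈ Set.Icc t T, ‖D τ‖ ≤ Cu / τ := by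
    intro τ hτ
    have hτ0 : 0 < τ := lt_of_lt_of_le ht hτ.1
    have h1 : ‖D τ‖ ≤ ‖fderiv ℝ u (x, τ)‖ * ‖((0 : Edge d), (1 : ℝ))‖ :=
      (fderiv ℝ u (x, τ)).le_opNorm _
    have h2 : ‖((0 : Edge d), (1 : ℝ))‖ = 1 := by
      rw [Prod.norm_def]; simp
    rw [le_div_iff₀ hτ0]
    rw [h2, mul_one] at h1
    calc ‖D τ‖ * τ ≤ ‖fderiv ℝ u (x, τ)‖ * τ := mul_le_mul_of_nonneg_right h1 hτ0.le
      _ = τ * ‖fderiv ℝ u (x, τ)‖ := by ring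
      _ ≤ Cu := hCu (x, τ) (hmem τ hτ)
  have hmain : ‖∫ τ in t..T, D τ‖ ≤ ∫ τ in t..T, Cu / τ := by
    refine (intervalIntegral.norm_integral_le_integral_norm htT).trans ?_
    refine intervalIntegral.integral_mono_on htT (hDi.norm) hgi ?_
    exact hnorm
  have hval : ∫ τ in t..T, Cu / τ = Cu * Real.log (T / t) := by
    have : ∀ τ : ℝ, Cu / τ = Cu * (1 / τ) := by intro τ; ring
    simp_rw [this]
    rw [intervalIntegral.integral_const_mul, integral_one_div hnz]
  rw [← hftc]
  rw [hval] at hmain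
  exact hmain

theorem stmt7 (n M : ℕ) (hn : 2 ≤ n) (hM : 1 ≤ M)
    (u : Half (n - 1) → Vec M)
    (hu : ContDiffOn ℝ 1 u (upperHS (n - 1)))
    (Cu : ℝ)
    (hCu : ∀ p ∈ upperHS (n - 1), p.2 * ‖fderiv ℝ u p‖ ≤ Cu) :
    ∀ (x y : Edge (n - 1)) (t : ℝ), 0 < t →
      ‖u (x, t) - u (y, t)‖ ≤ 2 * Cu * Ups (dist x y / t) := by
  intro x y t ht
  have hCu0 : 0 ≤ Cu := by
    have h1 : ((x, t) : Half (n - 1)) ∈ upperHS (n - 1) := ht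
    have := hCu (x, t) h1
    nlinarith [norm_nonneg (fderiv ℝ u ((x, t) : Half (n - 1))), ht.le]
  set r := dist x y with hr
  have hr0 : 0 ≤ r := dist_nonneg
  by_cases hle : r ≤ t
  · -- near case
    have hs1 : r / t ≤ 1 := (div_le_one ht).mpr hle
    rw [Ups, if_pos hs1]
    have := aux_horiz hu hCu x y ht
    calc ‖u (x, t) - u (y, t)‖ ≤ Cu / t * r := this
      _ = Cu * (r / t) := by ring
      _ ≤ 2 * Cu * (r / t) := by
          have hst : 0 ≤ r / t := div_nonneg hr0 ht.le
          nlinarith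
  · -- far case
    push_neg at hle
    have hT : 0 < r := lt_trans ht hle
    have hs1 : ¬ (r / t ≤ 1) := by
      rw [not_le, lt_div_iff₀ ht]; simpa using hle
    rw [Ups, if_neg hs1]
    have hlog : 0 ≤ Real.log (r / t) := by
      apply Real.log_nonneg
      rw [le_div_iff₀ ht]; simpa using hle.le
    have hv1 : ‖u (x, r) - u (x, t)‖ ≤ Cu * Real.log (r / t) :=
      aux_vert hu hCu x ht hle.le
    have hv2 : ‖u (y, r) - u (y, t)‖ ≤ Cu * Real.log (r / t) :=
      aux_vert hu hCu y ht hle.le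
    have hh : ‖u (x, r) - u (y, r)‖ ≤ Cu := by
      have := aux_horiz hu hCu x y hT
      calc ‖u (x, r) - u (y, r)‖ ≤ Cu / r * r := this
        _ = Cu := div_mul_cancel₀ Cu (ne_of_gt hT)
    have htri : ‖u (x, t) - u (y, t)‖ ≤
        ‖u (x, r) - u (x, t)‖ + ‖u (x, r) - u (y, r)‖ + ‖u (y, r) - u (y, t)‖ := by
      have : u (x, t) - u (y, t) =
          -(u (x, r) - u (x, t)) + (u (x, r) - u (y, r)) + (u (y, r) - u (y, t)) := by
        abel
      rw [this]
      calc ‖-(u (x, r) - u (x, t)) + (u (x, r) - u (y, r)) + (u (y, r) - u (y, t))‖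
          ≤ ‖-(u (x, r) - u (x, t)) + (u (x, r) - u (y, r))‖ + ‖u (y, r) - u (y, t)‖ :=
            norm_add_le _ _
        _ ≤ ‖-(u (x, r) - u (x, t))‖ + ‖u (x, r) - u (y, r)‖ + ‖u (y, r) - u (y, t)‖ := by
            gcongr; exact norm_add_le _ _
        _ = ‖u (x, r) - u (x, t)‖ + ‖u (x, r) - u (y, r)‖ + ‖u (y, r) - u (y, t)‖ := by
            rw [norm_neg]
    calc ‖u (x, t) - u (y, t)‖
        ≤ ‖u (x, r) - u (x, t)‖ + ‖u (x, r) - u (y, r)‖ + ‖u (y, r) - u (y, t)‖ := htri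
      _ ≤ Cu * Real.log (r / t) + Cu + Cu * Real.log (r / t) := by gcongr
      _ ≤ 2 * Cu * (1 + Real.log (r / t)) := by nlinarith
end
end

section
/- Let n ≥ 2 be an integer. For every a > 0 the quantity Ψ(a) := ∫_0^∞ s^{n-2}·(a+s)^{-n}·Υ_#(s) ds satisfies Ψ(a) ≤ 3·(1 + ln(1/a)) if a ≤ 1, and Ψ(a) ≤ 3·(1 + ln a)/a if a > 1. In particular Ψ(a) ≤ 3·(1 + max{ln(1/a), 0}) for every a > 0. -/
open MeasureTheory Filter Topology ENNReal

noncomputable section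

open Set

lemma aux_tail (c : ℝ) (hc : 1 ≤ c) :
    IntegrableOn (fun s : ℝ => (1 + Real.log s) / s ^ 2) (Set.Ioi c) ∧
    ∫ s in Set.Ioi c, (1 + Real.log s) / s ^ 2 = (2 + Real.log c) / c := by
  have hc0 : 0 < c := lt_of_lt_of_le one_pos hc
  set F : ℝ → ℝ := fun x => -((2 + Real.log x) / x) with hF
  have hderiv : ∀ x ∈ Set.Ioi c, HasDerivAt F ((1 + Real.log x) / x ^ 2) x := by
    intro x hx
    have hx0 : 0 < x := lt_trans hc0 hx
    have h1 : HasDerivAt (fun x : ℝ => (2 + Real.log x) / x)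
        ((x⁻¹ * x - (2 + Real.log x) * 1) / x ^ 2) x :=
      (((Real.hasDerivAt_log hx0.ne').const_add 2).div (hasDerivAt_id x) hx0.ne')
    have := h1.neg
    refine this.congr_deriv ?_
    rw [inv_mul_cancel₀ hx0.ne']; ring
  have hpos : ∀ x ∈ Set.Ioi c, 0 ≤ (1 + Real.log x) / x ^ 2 := by
    intro x hx
    have hx1 : 1 ≤ x := le_trans hc (le_of_lt hx)
    have : 0 ≤ Real.log x := Real.log_nonneg hx1
    positivity
  have htend : Tendsto F atTop (𝓝 0) := by
    have h1 : Tendsto (fun x : ℝ => 2 / x) atTop (𝓝 0) :=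
      Tendsto.div_atTop tendsto_const_nhds tendsto_id
    have h2 : Tendsto (fun x : ℝ => Real.log x / x) atTop (𝓝 0) :=
      Real.isLittleO_log_id_atTop.tendsto_div_nhds_zero
    have h3 := (h1.add h2).neg
    rw [add_zero, neg_zero] at h3
    refine h3.congr fun x => ?_
    simp only [hF, ← add_div]
  have hcont : ContinuousWithinAt F (Set.Ici c) c := by
    apply ContinuousAt.continuousWithinAt
    have : ContinuousAt (fun x : ℝ => (2 + Real.log x) / x) c :=
      ((Real.continuousAt_log hc0.ne').const_add 2).div continuousAt_id hc0.ne'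
    exact this.neg
  refine ⟨integrableOn_Ioi_deriv_of_nonneg hcont hderiv hpos htend, ?_⟩
  rw [integral_Ioi_of_hasDerivAt_of_nonneg hcont hderiv hpos htend]
  simp [hF]

lemma aux_int_Ioi1 (a : ℝ) (ha : 0 < a) :
    IntegrableOn (fun s : ℝ => (1 + Real.log s) / (a + s) ^ 2) (Set.Ioi 1) := by
  have hcont : ContinuousOn (fun s : ℝ => (1 + Real.log s) / (a + s) ^ 2) (Set.Ioi 1) := by
    apply ContinuousOn.div
    · exact continuousOn_const.add (Real.continuousOn_log.mono (fun s hs => by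
        simp only [mem_compl_iff, mem_singleton_iff]
        exact ne_of_gt (lt_trans one_pos hs)))
    · fun_prop
    · intro s hs
      have : 0 < a + s := by have : (1:ℝ) < s := hs; linarith
      positivity
  refine Integrable.mono' (aux_tail 1 le_rfl).1
    (hcont.aestronglyMeasurable measurableSet_Ioi) ?_
  rw [ae_restrict_iff' measurableSet_Ioi]
  filter_upwards with s hs
  have hs1 : (1:ℝ) < s := hs
  have hlog : 0 ≤ Real.log s := Real.log_nonneg hs1.le
  have hpos : (0:ℝ) < a + s := by linarith
  rw [Real.norm_eq_abs, abs_of_nonneg (by positivity)]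
  apply div_le_div_of_nonneg_left (by linarith) (by positivity)
  nlinarith

lemma aux_log_int (a : ℝ) (ha : 0 < a) :
    ∫ s in Set.Ioc (0:ℝ) 1, (a + s)⁻¹ = Real.log (a + 1) - Real.log a := by
  rw [← intervalIntegral.integral_of_le zero_le_one]
  have : ∀ x ∈ Set.uIcc (0:ℝ) 1, HasDerivAt (fun s : ℝ => Real.log (a + s)) (a + x)⁻¹ x := by
    intro x hx
    rw [Set.uIcc_of_le zero_le_one] at hx
    have hpos : 0 < a + x := by have := hx.1; linarith
    have h1 : HasDerivAt (fun s : ℝ => a + s) 1 x := (hasDerivAt_id x).const_add a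
    have := h1.log hpos.ne'
    simpa using this
  rw [intervalIntegral.integral_eq_sub_of_hasDerivAt this ?_]
  · norm_num
  · apply ContinuousOn.intervalIntegrable
    apply ContinuousOn.inv₀ (by fun_prop)
    intro x hx
    rw [Set.uIcc_of_le zero_le_one] at hx
    have := hx.1; positivity

lemma aux_inv2_int (a : ℝ) (ha : 1 < a) :
    ∫ s in Set.Ioc (1:ℝ) a, ((a + s) ^ 2)⁻¹ = (a + 1)⁻¹ - (2 * a)⁻¹ := by
  have ha0 : (0:ℝ) < a := lt_trans one_pos ha
  rw [← intervalIntegral.integral_of_le ha.le]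
  have : ∀ x ∈ Set.uIcc (1:ℝ) a, HasDerivAt (fun s : ℝ => -(a + s)⁻¹) ((a + x) ^ 2)⁻¹ x := by
    intro x hx
    rw [Set.uIcc_of_le ha.le] at hx
    have hpos : 0 < a + x := by have := hx.1; linarith
    have h1 : HasDerivAt (fun s : ℝ => a + s) 1 x := (hasDerivAt_id x).const_add a
    have := (h1.inv hpos.ne').neg
    refine this.congr_deriv ?_
    ring
  rw [intervalIntegral.integral_eq_sub_of_hasDerivAt this ?_]
  · rw [two_mul]; ring_nf
  · apply ContinuousOn.intervalIntegrable
    apply ContinuousOn.inv₀ (by fun_prop)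
    intro x hx
    rw [Set.uIcc_of_le ha.le] at hx
    have hx1 := hx.1
    have : 0 < a + x := by linarith
    positivity

lemma ups_nonneg {s : ℝ} (hs : 0 ≤ s) : 0 ≤ Ups s := by
  unfold Ups
  split
  · exact hs
  · next h =>
    have : (1:ℝ) < s := not_le.1 h
    have := Real.log_nonneg this.le
    linarith

theorem stmt8 (n : ℕ) (hn : 2 ≤ n) (a : ℝ) (ha : 0 < a) :
    (a ≤ 1 →
      ∫ s in Set.Ioi (0 : ℝ), s ^ (n - 2) / (a + s) ^ n * Ups s
        ≤ 3 * (1 + Real.log (1 / a))) ∧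
    (1 < a →
      ∫ s in Set.Ioi (0 : ℝ), s ^ (n - 2) / (a + s) ^ n * Ups s
        ≤ 3 * (1 + Real.log a) / a) ∧
    ∫ s in Set.Ioi (0 : ℝ), s ^ (n - 2) / (a + s) ^ n * Ups s
      ≤ 3 * (1 + max (Real.log (1 / a)) 0) := by
  set f : ℝ → ℝ := fun s => s ^ (n - 2) / (a + s) ^ n * Ups s with hf
  set g1 : ℝ → ℝ := fun s => s / (a + s) ^ 2 with hg1
  set g2 : ℝ → ℝ := fun s => (1 + Real.log s) / (a + s) ^ 2 with hg2
  set gg : ℝ → ℝ := fun s => Ups s / (a + s) ^ 2 with hgg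
  -- continuity / integrability of g1 on Ioc 0 1
  have contg1 : ContinuousOn g1 (Set.Icc 0 1) := by
    apply ContinuousOn.div continuousOn_id (by fun_prop)
    intro s hs
    have := hs.1
    have : 0 < a + s := by linarith
    positivity
  have intg1 : IntegrableOn g1 (Set.Ioc 0 1) :=
    (contg1.integrableOn_Icc).mono_set Set.Ioc_subset_Icc_self
  have intg2 : IntegrableOn g2 (Set.Ioi 1) := aux_int_Ioi1 a ha
  -- gg agrees with g1 on Ioc 0 1 and with g2 on Ioi 1
  have eq1 : Set.EqOn g1 gg (Set.Ioc 0 1) := by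
    intro s hs
    simp only [hgg, hg1, Ups, if_pos hs.2]
  have eq2 : Set.EqOn g2 gg (Set.Ioi 1) := by
    intro s hs
    have : ¬ (s ≤ 1) := not_le.2 hs
    simp only [hgg, hg2, Ups, if_neg this]
  have intgg1 : IntegrableOn gg (Set.Ioc 0 1) := intg1.congr_fun eq1 measurableSet_Ioc
  have intgg2 : IntegrableOn gg (Set.Ioi 1) := intg2.congr_fun eq2 measurableSet_Ioi
  have intgg : IntegrableOn gg (Set.Ioi 0) := by
    rw [← Set.Ioc_union_Ioi_eq_Ioi (zero_le_one)]
    exact intgg1.union intgg2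
  -- main comparison
  have step1 : ∫ s in Set.Ioi (0:ℝ), f s ≤ ∫ s in Set.Ioi (0:ℝ), gg s := by
    apply integral_mono_of_nonneg
    · filter_upwards [ae_restrict_mem measurableSet_Ioi] with s hs
      have hs0 : (0:ℝ) < s := hs
      have hpos : (0:ℝ) < a + s := by linarith
      have := ups_nonneg hs0.le
      simp only [hf]
      positivity
    · exact intgg
    · filter_upwards [ae_restrict_mem measurableSet_Ioi] with s hs
      have hs0 : (0:ℝ) < s := hs
      have hpos : (0:ℝ) < a + s := by linarith
      have hups := ups_nonneg hs0.le
      have hsplit : (a + s) ^ n = (a + s) ^ (n - 2) * (a + s) ^ 2 := by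
        rw [← pow_add]; congr 1; omega
      have e : f s = (s ^ (n-2) / (a+s) ^ (n-2)) * (Ups s / (a+s) ^ 2) := by
        simp only [hf, hsplit]
        field_simp
      have hratio : s ^ (n-2) / (a+s) ^ (n-2) ≤ 1 := by
        rw [div_le_one (by positivity)]
        exact pow_le_pow_left₀ hs0.le (by linarith) _
      have hB : 0 ≤ Ups s / (a+s) ^ 2 := by positivity
      calc f s = (s ^ (n-2) / (a+s) ^ (n-2)) * (Ups s / (a+s) ^ 2) := e
        _ ≤ 1 * (Ups s / (a+s) ^ 2) := mul_le_mul_of_nonneg_right hratio hB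
        _ = gg s := by rw [one_mul]
  -- split the integral of gg
  have step2 : ∫ s in Set.Ioi (0:ℝ), gg s
      = (∫ s in Set.Ioc (0:ℝ) 1, g1 s) + ∫ s in Set.Ioi (1:ℝ), g2 s := by
    rw [← Set.Ioc_union_Ioi_eq_Ioi (zero_le_one),
      setIntegral_union (Set.Ioc_disjoint_Ioi le_rfl) measurableSet_Ioi intgg1 intgg2]
    congr 1
    · exact (setIntegral_congr_fun measurableSet_Ioc eq1).symm
    · exact (setIntegral_congr_fun measurableSet_Ioi eq2).symm
  have main : ∫ s in Set.Ioi (0:ℝ), f s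
      ≤ (∫ s in Set.Ioc (0:ℝ) 1, g1 s) + ∫ s in Set.Ioi (1:ℝ), g2 s := by
    rw [← step2]; exact step1
  -- the small-a bound
  have boundA : a ≤ 1 → ∫ s in Set.Ioi (0:ℝ), f s ≤ 3 * (1 + Real.log (1/a)) := by
    intro ha1
    have b1 : (∫ s in Set.Ioc (0:ℝ) 1, g1 s) ≤ Real.log (a+1) - Real.log a := by
      rw [← aux_log_int a ha]
      apply setIntegral_mono_on intg1 ?_ measurableSet_Ioc
      · intro s hs
        have hs0 : 0 < s := hs.1
        have hpos : 0 < a + s := by linarith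
        simp only [hg1]
        rw [div_le_iff₀ (by positivity)]
        rw [inv_mul_eq_div, le_div_iff₀ hpos]
        nlinarith
      · apply IntegrableOn.mono_set ?_ Set.Ioc_subset_Icc_self
        apply ContinuousOn.integrableOn_Icc
        apply ContinuousOn.inv₀ (by fun_prop)
        intro x hx
        have := hx.1
        positivity
    have b2 : (∫ s in Set.Ioi (1:ℝ), g2 s) ≤ 2 := by
      have h2 := (aux_tail 1 le_rfl).2
      simp only [Real.log_one, add_zero, div_one] at h2
      rw [← h2]
      apply setIntegral_mono_on intg2 (aux_tail 1 le_rfl).1 measurableSet_Ioi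
      intro s hs
      have hs1 : (1:ℝ) < s := hs
      have hlog : 0 ≤ Real.log s := Real.log_nonneg hs1.le
      simp only [hg2]
      apply div_le_div_of_nonneg_left (by linarith) (by positivity)
      nlinarith
    have hlog1 : Real.log (a+1) ≤ 1 := by
      have := Real.log_le_sub_one_of_pos (x := a+1) (by linarith)
      linarith
    have hloga : Real.log a ≤ 0 := Real.log_nonpos ha.le ha1
    rw [one_div, Real.log_inv]
    linarith
  -- the large-a bound
  have boundB : 1 < a → ∫ s in Set.Ioi (0:ℝ), f s ≤ 3 * (1 + Real.log a) / a := by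
    intro ha1
    have hL : 0 ≤ Real.log a := Real.log_nonneg ha1.le
    set L := Real.log a with hLdef
    -- bound I1
    have b1 : (∫ s in Set.Ioc (0:ℝ) 1, g1 s) ≤ 1 / (2 * a) := by
      have step : (∫ s in Set.Ioc (0:ℝ) 1, g1 s) ≤ ∫ s in Set.Ioc (0:ℝ) 1, s / a ^ 2 := by
        apply setIntegral_mono_on intg1 ?_ measurableSet_Ioc
        · intro s hs
          have hs0 : 0 < s := hs.1
          simp only [hg1]
          apply div_le_div_of_nonneg_left hs0.le (by positivity)
          nlinarith
        · exact ((continuous_id.div_const (a^2)).integrableOn_Icc).mono_set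
            Set.Ioc_subset_Icc_self
      have calc2 : ∫ s in Set.Ioc (0:ℝ) 1, s / a ^ 2 = (1/2) / a ^ 2 := by
        simp_rw [div_eq_mul_inv]
        rw [integral_mul_const, ← intervalIntegral.integral_of_le zero_le_one,
          integral_id]
        norm_num
      rw [calc2] at step
      have : (1/2) / a ^ 2 ≤ 1 / (2 * a) := by
        rw [div_le_div_iff₀ (by positivity) (by positivity)]
        nlinarith
      linarith
    -- split I2
    have intg2a : IntegrableOn g2 (Set.Ioc 1 a) :=
      intg2.mono_set Set.Ioc_subset_Ioi_self
    have intg2b : IntegrableOn g2 (Set.Ioi a) :=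
      intg2.mono_set (Set.Ioi_subset_Ioi ha1.le)
    have split2 : (∫ s in Set.Ioi (1:ℝ), g2 s)
        = (∫ s in Set.Ioc (1:ℝ) a, g2 s) + ∫ s in Set.Ioi a, g2 s := by
      rw [← Set.Ioc_union_Ioi_eq_Ioi ha1.le,
        setIntegral_union (Set.Ioc_disjoint_Ioi le_rfl) measurableSet_Ioi intg2a intg2b]
    -- middle piece
    have b2 : (∫ s in Set.Ioc (1:ℝ) a, g2 s) ≤ (1 + L) * (1 / (2 * a)) := by
      have hmid : (∫ s in Set.Ioc (1:ℝ) a, g2 s)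
          ≤ ∫ s in Set.Ioc (1:ℝ) a, (1 + L) * ((a + s) ^ 2)⁻¹ := by
        apply setIntegral_mono_on intg2a ?_ measurableSet_Ioc
        · intro s hs
          have hs1 : (1:ℝ) < s := hs.1
          have hpos : (0:ℝ) < a + s := by linarith
          simp only [hg2, ← div_eq_mul_inv]
          gcongr
          exact Real.log_le_log (by linarith) hs.2
        · apply Integrable.const_mul
          apply IntegrableOn.mono_set ?_ Set.Ioc_subset_Icc_self
          apply ContinuousOn.integrableOn_Icc
          apply ContinuousOn.inv₀ (by fun_prop)
          intro x hx
          have := hx.1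
          have : (0:ℝ) < a + x := by linarith
          positivity
      rw [integral_const_mul, aux_inv2_int a ha1] at hmid
      have hineq : (a + 1)⁻¹ - (2 * a)⁻¹ ≤ 1 / (2 * a) := by
        rw [sub_le_iff_le_add, one_div, ← two_mul]
        have h1 : (a + 1)⁻¹ ≤ a⁻¹ := by
          apply inv_anti₀ (by linarith) (by linarith)
        have h2 : 2 * (2 * a)⁻¹ = a⁻¹ := by
          field_simp
        linarith
      calc (∫ s in Set.Ioc (1:ℝ) a, g2 s) ≤ (1 + L) * ((a + 1)⁻¹ - (2 * a)⁻¹) := hmid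
        _ ≤ (1 + L) * (1 / (2 * a)) := mul_le_mul_of_nonneg_left hineq (by linarith)
    -- tail piece
    have b3 : (∫ s in Set.Ioi a, g2 s) ≤ (2 + L) / a := by
      have ha1' : (1:ℝ) ≤ a := ha1.le
      rw [← (aux_tail a ha1').2]
      apply setIntegral_mono_on intg2b (aux_tail a ha1').1 measurableSet_Ioi
      intro s hs
      have hsa : a < s := hs
      have hs1 : (1:ℝ) < s := lt_of_le_of_lt ha1' hsa
      have hlog : 0 ≤ Real.log s := Real.log_nonneg hs1.le
      simp only [hg2]
      apply div_le_div_of_nonneg_left (by linarith) (by positivity)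
      nlinarith
    -- combine
    have total : ∫ s in Set.Ioi (0:ℝ), f s
        ≤ 1 / (2 * a) + ((1 + L) * (1 / (2 * a)) + (2 + L) / a) := by
      rw [split2] at main
      linarith
    have finalineq : 1 / (2 * a) + ((1 + L) * (1 / (2 * a)) + (2 + L) / a)
        ≤ 3 * (1 + L) / a := by
      have ha0 : (0:ℝ) < a := lt_trans one_pos ha1
      have key : 1 / (2 * a) + ((1 + L) * (1 / (2 * a)) + (2 + L) / a)
          = (3 + (3/2) * L) / a := by
        field_simp
        ring
      rw [key, div_le_div_iff₀ (by positivity) (by positivity)]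
      nlinarith
    linarith
  refine ⟨boundA, boundB, ?_⟩
  rcases le_or_gt a 1 with h | h
  · have : 0 ≤ Real.log (1/a) := by
      rw [one_div, Real.log_inv]
      have := Real.log_nonpos ha.le h
      linarith
    rw [max_eq_left this]
    exact boundA h
  · have hneg : Real.log (1/a) ≤ 0 := by
      rw [one_div, Real.log_inv]
      have := Real.log_nonneg h.le
      linarith
    rw [max_eq_right hneg]
    have hb := boundB h
    have : 3 * (1 + Real.log a) / a ≤ 3 := by
      rw [div_le_iff₀ (lt_trans one_pos h)]
      have := Real.log_le_sub_one_of_pos (lt_trans one_pos h)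
      linarith
    calc ∫ s in Set.Ioi (0:ℝ), f s ≤ 3 * (1 + Real.log a) / a := hb
      _ ≤ 3 := this
      _ = 3 * (1 + 0) := by ring
end
end

section
/- Let n ≥ 2 and fix ε > 0. There exists a constant C = C(n,ε) ∈ (0,∞) such that for every f ∈ L¹_loc(R^{n-1}, C^M) and every cube Q ⊂ R^{n-1} with center x'_Q one has ∫_{R^{n-1}} |f(y') − f_Q| / (ℓ(Q) + |x'_Q − y'|)^{n-1+ε} dy' ≤ C·ℓ(Q)^{-ε}·∫_1^∞ ( (1/|λQ|)∫_{λQ} |f(y') − f_{λQ}| dy' ) λ^{-1-ε} dλ, where λQ denotes the cube concentric with Q of side-length λ·ℓ(Q). -/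
open MeasureTheory Filter Topology ENNReal

noncomputable section

section Aux

variable {d M : ℕ}

lemma cube_subset (c : Edge d) {a b : ℝ} (h : a ≤ b) : cube c a ⊆ cube c b :=
  fun x hx i => (hx i).trans (by linarith)

lemma measurableSet_cube (c : Edge d) (ℓ : ℝ) : MeasurableSet (cube c ℓ) := by
  have : cube c ℓ = ⋂ i, {x : Edge d | |x i - c i| ≤ ℓ / 2} := by
    ext x; simp [cube, Set.mem_iInter]
  rw [this]
  exact MeasurableSet.iInter fun i =>
    measurableSet_le (by fun_prop) measurable_const

lemma isCompact_cube (c : Edge d) (ℓ : ℝ) : IsCompact (cube c ℓ) := by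
  have hc : IsClosed (cube c ℓ) := by
    have : cube c ℓ = ⋂ i, {x : Edge d | |x i - c i| ≤ ℓ / 2} := by
      ext x; simp [cube, Set.mem_iInter]
    rw [this]
    exact isClosed_iInter fun i => isClosed_le (by fun_prop) continuous_const
  have hb : Bornology.IsBounded (cube c ℓ) := by
    rw [Metric.isBounded_iff_subset_closedBall c]
    refine ⟨Real.sqrt (d * (ℓ/2)^2), fun x hx => ?_⟩
    rw [Metric.mem_closedBall, EuclideanSpace.dist_eq]
    apply Real.sqrt_le_sqrt
    calc ∑ i, dist (x i) (c i) ^ 2 ≤ ∑ _i : Fin d, (ℓ/2)^2 := by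
          refine Finset.sum_le_sum fun i _ => ?_
          have := hx i
          rw [Real.dist_eq]
          nlinarith [abs_nonneg (x i - c i)]
      _ = d * (ℓ/2)^2 := by simp [Finset.sum_const, mul_comm]
  exact Metric.isCompact_of_isClosed_isBounded hc hb

lemma volume_cube (c : Edge d) {ℓ : ℝ} (hℓ : 0 ≤ ℓ) :
    volume (cube c ℓ) = ENNReal.ofReal (ℓ ^ d) := by
  have hmp := PiLp.volume_preserving_ofLp (Fin d)
  have hpre : cube c ℓ =
      (@WithLp.ofLp 2 (Fin d → ℝ)) ⁻¹'
        (Set.univ.pi fun i => Set.Icc (c i - ℓ/2) (c i + ℓ/2)) := by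
    ext x
    simp only [cube, Set.mem_preimage, Set.mem_pi, Set.mem_univ, forall_true_left,
      Set.mem_Icc, Set.mem_setOf_eq]
    constructor
    · intro h i; have := abs_le.mp (h i); exact ⟨by linarith [this.1], by linarith [this.2]⟩
    · intro h i; rw [abs_le]; exact ⟨by linarith [(h i).1], by linarith [(h i).2]⟩
  rw [hpre, MeasurePreserving.measure_preimage hmp
    (MeasurableSet.univ_pi fun i => measurableSet_Icc).nullMeasurableSet,
    volume_pi_pi]
  simp only [Real.volume_Icc, show ∀ i : Fin d, c i + ℓ/2 - (c i - ℓ/2) = ℓ from fun i => by ring]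
  simp [Finset.prod_const, ← ENNReal.ofReal_pow hℓ]

lemma dist_ge_of_not_mem_cube {c y : Edge d} {ℓ : ℝ} (h : y ∉ cube c ℓ) :
    ℓ / 2 ≤ dist c y := by
  simp only [cube, Set.mem_setOf_eq, not_forall, not_le] at h
  obtain ⟨i, hi⟩ := h
  have h1 : |y i - c i| ≤ dist c y := by
    rw [EuclideanSpace.dist_eq]
    have : |y i - c i| = Real.sqrt ((dist (c i) (y i))^2) := by
      rw [Real.sqrt_sq_eq_abs, Real.dist_eq, abs_sub_comm, abs_abs]
    rw [this]
    apply Real.sqrt_le_sqrt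
    exact Finset.single_le_sum (f := fun j => dist (c j) (y j) ^ 2)
      (fun j _ => sq_nonneg _) (Finset.mem_univ i)
  linarith

lemma exists_mem_cube (c y : Edge d) {ℓ : ℝ} (hℓ : 0 < ℓ) :
    ∃ k : ℕ, y ∈ cube c (2 ^ k * ℓ) := by
  obtain ⟨k, hk⟩ := pow_unbounded_of_one_lt (2 * dist c y / ℓ) (by norm_num : (1:ℝ) < 2)
  refine ⟨k, fun i => ?_⟩
  have h1 : |y i - c i| ≤ dist c y := by
    rw [EuclideanSpace.dist_eq]
    have : |y i - c i| = Real.sqrt ((dist (c i) (y i))^2) := by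
      rw [Real.sqrt_sq_eq_abs, Real.dist_eq, abs_sub_comm, abs_abs]
    rw [this]
    apply Real.sqrt_le_sqrt
    exact Finset.single_le_sum (f := fun j => dist (c j) (y j) ^ 2)
      (fun j _ => sq_nonneg _) (Finset.mem_univ i)
  have : 2 * dist c y / ℓ < 2 ^ k := hk
  have : 2 * dist c y < 2 ^ k * ℓ := by
    rw [div_lt_iff₀ hℓ] at this; linarith
  linarith

variable {d M : ℕ} {f : Edge d → Vec M} {c : Edge d}

lemma integrableOn_cube (hf : LocallyIntegrable f volume) (c : Edge d) (ℓ : ℝ) :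
    IntegrableOn f (cube c ℓ) volume :=
  hf.integrableOn_isCompact (isCompact_cube c ℓ)

lemma pow_pos_ofReal {b : ℝ} (hb : 0 < b) :
    ENNReal.ofReal (b ^ d) ≠ 0 ∧ ENNReal.ofReal (b ^ d) ≠ ⊤ :=
  ⟨by simp [ENNReal.ofReal_eq_zero, not_le, pow_pos hb], ENNReal.ofReal_ne_top⟩

lemma lintegral_osc_eq {b : ℝ} (hb : 0 < b) :
    ∫⁻ x in cube c b, (‖f x - cubeAvg f c b‖₊ : ℝ≥0∞)
      = ENNReal.ofReal (b ^ d) * meanOsc f c b := by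
  rw [meanOsc, ← mul_assoc, ENNReal.mul_inv_cancel (pow_pos_ofReal hb).1 (pow_pos_ofReal hb).2,
    one_mul]

lemma avg_sub_eq (hf : LocallyIntegrable f volume) {a : ℝ} (ha : 0 < a) (K : Vec M) :
    cubeAvg f c a - K = (a ^ d)⁻¹ • ∫ x in cube c a, (f x - K) := by
  have hvol : volume (cube c a) = ENNReal.ofReal (a ^ d) := volume_cube c ha.le
  have hfin : volume (cube c a) ≠ ⊤ := by rw [hvol]; exact ENNReal.ofReal_ne_top
  rw [integral_sub (integrableOn_cube hf c a)
    (integrableOn_const hfin),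
    integral_const, smul_sub, measureReal_restrict_apply_univ, measureReal_def, hvol, ENNReal.toReal_ofReal (pow_nonneg ha.le d)]
  rw [cubeAvg, smul_smul, inv_mul_cancel₀ (by positivity : (a:ℝ)^d ≠ 0), one_smul]

lemma avg_diff_le (hf : LocallyIntegrable f volume) {a b : ℝ} (ha : 0 < a) (hab : a ≤ b) :
    (‖cubeAvg f c a - cubeAvg f c b‖₊ : ℝ≥0∞)
      ≤ ENNReal.ofReal ((b / a) ^ d) * meanOsc f c b := by
  have hb : 0 < b := ha.trans_le hab
  rw [avg_sub_eq hf ha (cubeAvg f c b)]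
  rw [nnnorm_smul]
  push_cast
  have h1 : (‖(a ^ d)⁻¹‖₊ : ℝ≥0∞) = ENNReal.ofReal ((a ^ d)⁻¹) := by
    rw [← Real.enorm_eq_ofReal (by positivity), enorm_eq_nnnorm]
  rw [h1]
  have h2 : (‖∫ x in cube c a, (f x - cubeAvg f c b)‖₊ : ℝ≥0∞)
      ≤ ∫⁻ x in cube c a, (‖f x - cubeAvg f c b‖₊ : ℝ≥0∞) :=
    enorm_integral_le_lintegral_enorm _
  have h3 : ∫⁻ x in cube c a, (‖f x - cubeAvg f c b‖₊ : ℝ≥0∞)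
      ≤ ∫⁻ x in cube c b, (‖f x - cubeAvg f c b‖₊ : ℝ≥0∞) :=
    lintegral_mono_set (cube_subset c hab)
  calc ENNReal.ofReal ((a ^ d)⁻¹) * ↑‖∫ x in cube c a, (f x - cubeAvg f c b)‖₊
      ≤ ENNReal.ofReal ((a ^ d)⁻¹) * (ENNReal.ofReal (b ^ d) * meanOsc f c b) := by
        gcongr
        exact h2.trans (h3.trans_eq (lintegral_osc_eq hb))
    _ = ENNReal.ofReal ((b / a) ^ d) * meanOsc f c b := by
        rw [← mul_assoc, ← ENNReal.ofReal_mul (by positivity)]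
        congr 2
        rw [div_pow]
        field_simp

lemma meanOsc_comp (hf : LocallyIntegrable f volume) {a b : ℝ} (ha : 0 < a) (hab : a ≤ b) :
    meanOsc f c a ≤ ENNReal.ofReal (2 * (b / a) ^ d) * meanOsc f c b := by
  have hb : 0 < b := ha.trans_le hab
  have key : ∫⁻ x in cube c a, (‖f x - cubeAvg f c a‖₊ : ℝ≥0∞)
      ≤ ENNReal.ofReal (2 * b ^ d) * meanOsc f c b := by
    have tri : ∀ x, (‖f x - cubeAvg f c a‖₊ : ℝ≥0∞)
        ≤ (‖f x - cubeAvg f c b‖₊ : ℝ≥0∞) + (‖cubeAvg f c b - cubeAvg f c a‖₊ : ℝ≥0∞) := by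
      intro x
      simpa [edist_eq_enorm_sub, enorm_eq_nnnorm] using
        edist_triangle (f x) (cubeAvg f c b) (cubeAvg f c a)
    calc ∫⁻ x in cube c a, (‖f x - cubeAvg f c a‖₊ : ℝ≥0∞)
        ≤ ∫⁻ x in cube c a, ((‖f x - cubeAvg f c b‖₊ : ℝ≥0∞)
            + (‖cubeAvg f c b - cubeAvg f c a‖₊ : ℝ≥0∞)) := lintegral_mono tri
      _ = (∫⁻ x in cube c a, (‖f x - cubeAvg f c b‖₊ : ℝ≥0∞))
            + volume (cube c a) * (‖cubeAvg f c b - cubeAvg f c a‖₊ : ℝ≥0∞) := by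
          rw [lintegral_add_right' _ aemeasurable_const, setLIntegral_const]; ring
      _ ≤ ENNReal.ofReal (b ^ d) * meanOsc f c b
            + ENNReal.ofReal (a ^ d) * (ENNReal.ofReal ((b / a) ^ d) * meanOsc f c b) := by
          gcongr
          · exact (lintegral_mono_set (cube_subset c hab)).trans_eq (lintegral_osc_eq hb)
          · exact (volume_cube c ha.le).le
          · rw [show ‖cubeAvg f c b - cubeAvg f c a‖₊ = ‖cubeAvg f c a - cubeAvg f c b‖₊ by
                rw [← neg_sub, nnnorm_neg]]
            exact avg_diff_le hf ha hab
      _ = ENNReal.ofReal (2 * b ^ d) * meanOsc f c b := by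
          rw [← mul_assoc, ← ENNReal.ofReal_mul (by positivity)]
          have : a ^ d * (b / a) ^ d = b ^ d := by
            rw [div_pow, mul_div_cancel₀]; positivity
          rw [this, ← add_mul, ← ENNReal.ofReal_add (by positivity) (by positivity)]
          norm_num [two_mul]
  rw [meanOsc]
  calc (ENNReal.ofReal (a ^ d))⁻¹ * ∫⁻ x in cube c a, (‖f x - cubeAvg f c a‖₊ : ℝ≥0∞)
      ≤ (ENNReal.ofReal (a ^ d))⁻¹ * (ENNReal.ofReal (2 * b ^ d) * meanOsc f c b) := by gcongr
    _ = ENNReal.ofReal (2 * (b / a) ^ d) * meanOsc f c b := by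
        rw [← ENNReal.ofReal_inv_of_pos (by positivity), ← mul_assoc,
          ← ENNReal.ofReal_mul (by positivity)]
        congr 2
        field_simp [div_pow]
        rw [div_pow, mul_div_cancel₀]; positivity

lemma avg_dyadic_diff (hf : LocallyIntegrable f volume) {ℓ : ℝ} (hℓ : 0 < ℓ) (k : ℕ) :
    (‖cubeAvg f c ℓ - cubeAvg f c (2 ^ k * ℓ)‖₊ : ℝ≥0∞)
      ≤ ENNReal.ofReal (2 ^ d) * ∑ j ∈ Finset.range k, meanOsc f c (2 ^ (j + 1) * ℓ) := by
  set g : ℕ → Vec M := fun j => cubeAvg f c (2 ^ j * ℓ) with hg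
  have h0 : cubeAvg f c ℓ = g 0 := by simp [hg]
  rw [h0]
  have hdist : dist (g 0) (g k) ≤ ∑ j ∈ Finset.range k, dist (g j) (g (j + 1)) :=
    dist_le_range_sum_dist g k
  calc (‖g 0 - g k‖₊ : ℝ≥0∞) = ENNReal.ofReal (dist (g 0) (g k)) := by
        rw [← enorm_eq_nnnorm, ← edist_eq_enorm_sub, edist_dist]
    _ ≤ ENNReal.ofReal (∑ j ∈ Finset.range k, dist (g j) (g (j + 1))) :=
        ENNReal.ofReal_le_ofReal hdist
    _ = ∑ j ∈ Finset.range k, ENNReal.ofReal (dist (g j) (g (j + 1))) :=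
        ENNReal.ofReal_sum_of_nonneg (fun j _ => dist_nonneg)
    _ ≤ ∑ j ∈ Finset.range k, ENNReal.ofReal (2 ^ d) * meanOsc f c (2 ^ (j + 1) * ℓ) := by
        refine Finset.sum_le_sum fun j _ => ?_
        have h1 : ENNReal.ofReal (dist (g j) (g (j + 1))) = (‖g j - g (j+1)‖₊ : ℝ≥0∞) := by
          rw [← edist_dist, edist_eq_enorm_sub, enorm_eq_nnnorm]
        rw [h1]
        have ha : (0:ℝ) < 2 ^ j * ℓ := by positivity
        have hab : (2:ℝ) ^ j * ℓ ≤ 2 ^ (j + 1) * ℓ := by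
          have : (2:ℝ)^j ≤ 2^(j+1) := by
            apply pow_le_pow_right₀ <;> norm_num
          nlinarith
        have := avg_diff_le (c := c) hf ha hab
        have hq : (2 ^ (j+1) * ℓ) / (2 ^ j * ℓ) = (2:ℝ) := by
          rw [pow_succ]; field_simp
        rw [hq] at this
        exact this
    _ = ENNReal.ofReal (2 ^ d) * ∑ j ∈ Finset.range k, meanOsc f c (2 ^ (j + 1) * ℓ) := by
        rw [Finset.mul_sum]

lemma Jk_le (hf : LocallyIntegrable f volume) {ℓ : ℝ} (hℓ : 0 < ℓ) {k : ℕ} (hk : 1 ≤ k) :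
    ∫⁻ x in cube c (2 ^ k * ℓ), (‖f x - cubeAvg f c ℓ‖₊ : ℝ≥0∞)
      ≤ ENNReal.ofReal ((2 ^ k * ℓ) ^ d) * (ENNReal.ofReal (2 ^ d) + 1)
          * ∑ j ∈ Finset.range k, meanOsc f c (2 ^ (j + 1) * ℓ) := by
  have hbk : (0:ℝ) < 2 ^ k * ℓ := by positivity
  have tri : ∀ x, (‖f x - cubeAvg f c ℓ‖₊ : ℝ≥0∞)
      ≤ (‖f x - cubeAvg f c (2 ^ k * ℓ)‖₊ : ℝ≥0∞)
        + (‖cubeAvg f c (2 ^ k * ℓ) - cubeAvg f c ℓ‖₊ : ℝ≥0∞) := by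
    intro x
    simpa [edist_eq_enorm_sub, enorm_eq_nnnorm] using
      edist_triangle (f x) (cubeAvg f c (2 ^ k * ℓ)) (cubeAvg f c ℓ)
  have hsum_mem : meanOsc f c (2 ^ k * ℓ)
      ≤ ∑ j ∈ Finset.range k, meanOsc f c (2 ^ (j + 1) * ℓ) := by
    have : k - 1 ∈ Finset.range k := by
      rw [Finset.mem_range]; omega
    have heq : 2 ^ ((k - 1) + 1) * ℓ = 2 ^ k * ℓ := by
      congr 2; omega
    calc meanOsc f c (2 ^ k * ℓ) = meanOsc f c (2 ^ ((k-1) + 1) * ℓ) := by rw [heq]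
      _ ≤ _ := Finset.single_le_sum (f := fun j => meanOsc f c (2 ^ (j + 1) * ℓ))
          (fun _ _ => zero_le) this
  calc ∫⁻ x in cube c (2 ^ k * ℓ), (‖f x - cubeAvg f c ℓ‖₊ : ℝ≥0∞)
      ≤ ∫⁻ x in cube c (2 ^ k * ℓ), ((‖f x - cubeAvg f c (2 ^ k * ℓ)‖₊ : ℝ≥0∞)
          + (‖cubeAvg f c (2 ^ k * ℓ) - cubeAvg f c ℓ‖₊ : ℝ≥0∞)) := lintegral_mono tri
    _ = (∫⁻ x in cube c (2 ^ k * ℓ), (‖f x - cubeAvg f c (2 ^ k * ℓ)‖₊ : ℝ≥0∞))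
          + volume (cube c (2 ^ k * ℓ)) * (‖cubeAvg f c (2 ^ k * ℓ) - cubeAvg f c ℓ‖₊ : ℝ≥0∞) := by
        rw [lintegral_add_right' _ aemeasurable_const, setLIntegral_const]; ring
    _ ≤ ENNReal.ofReal ((2 ^ k * ℓ) ^ d) * meanOsc f c (2 ^ k * ℓ)
          + ENNReal.ofReal ((2 ^ k * ℓ) ^ d)
            * (ENNReal.ofReal (2 ^ d) * ∑ j ∈ Finset.range k, meanOsc f c (2 ^ (j + 1) * ℓ)) := by
        gcongr
        · exact (lintegral_osc_eq hbk).le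
        · exact (volume_cube c hbk.le).le
        · rw [show ‖cubeAvg f c (2 ^ k * ℓ) - cubeAvg f c ℓ‖₊ = ‖cubeAvg f c ℓ - cubeAvg f c (2 ^ k * ℓ)‖₊ by
              rw [← neg_sub, nnnorm_neg]]
          exact avg_dyadic_diff hf hℓ k
    _ ≤ ENNReal.ofReal ((2 ^ k * ℓ) ^ d) * (∑ j ∈ Finset.range k, meanOsc f c (2 ^ (j + 1) * ℓ))
          + ENNReal.ofReal ((2 ^ k * ℓ) ^ d)
            * (ENNReal.ofReal (2 ^ d) * ∑ j ∈ Finset.range k, meanOsc f c (2 ^ (j + 1) * ℓ)) := by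
        gcongr
    _ = ENNReal.ofReal ((2 ^ k * ℓ) ^ d) * (ENNReal.ofReal (2 ^ d) + 1)
          * ∑ j ∈ Finset.range k, meanOsc f c (2 ^ (j + 1) * ℓ) := by
        ring

lemma tail_geom (r : ℝ≥0∞) (j : ℕ) :
    ∑' k : ℕ, (if j ≤ k then r ^ k else 0) = r ^ j * ∑' m : ℕ, r ^ m := by
  have h1 : ∑' k : ℕ, (if j ≤ k then r ^ k else 0)
      = ∑' k : ℕ, Set.indicator {k : ℕ | j ≤ k} (fun k => r ^ k) k := by
    apply tsum_congr; intro k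
    rw [Set.indicator_apply]
    simp only [Set.mem_setOf_eq]
  rw [h1, ← tsum_subtype]
  let e : ℕ ≃ {k : ℕ // j ≤ k} :=
    { toFun := fun m => ⟨j + m, Nat.le_add_right _ _⟩
      invFun := fun k => k.1 - j
      left_inv := fun m => by simp
      right_inv := fun k => by
        ext; simp [Nat.add_sub_cancel' k.2] }
  show (∑' (x : {k : ℕ // j ≤ k}), r ^ (x : ℕ)) = _
  rw [← Equiv.tsum_eq e (fun k => r ^ (k : ℕ))]
  have h2 : ∀ m : ℕ, r ^ ((e m : ℕ)) = r ^ j * r ^ m := by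
    intro m
    show r ^ (j + m) = _
    rw [pow_add]
  rw [tsum_congr h2, ENNReal.tsum_mul_left]

lemma sum_swap_le (b : ℕ → ℝ≥0∞) (r : ℝ≥0∞) :
    ∑' k : ℕ, r ^ k * ∑ j ∈ Finset.range (k + 1), b j
      ≤ (∑' m : ℕ, r ^ m) * ∑' j : ℕ, r ^ j * b j := by
  have h1 : ∀ k : ℕ, r ^ k * ∑ j ∈ Finset.range (k + 1), b j
      = ∑' j : ℕ, (if j ≤ k then r ^ k * b j else 0) := by
    intro k
    rw [tsum_eq_sum (s := Finset.range (k + 1))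
      (by intro j hj; rw [Finset.mem_range, Nat.lt_succ_iff] at hj; simp [hj])]
    rw [Finset.mul_sum]
    refine Finset.sum_congr rfl fun j hj => ?_
    rw [Finset.mem_range, Nat.lt_succ_iff] at hj
    simp [hj]
  calc ∑' k : ℕ, r ^ k * ∑ j ∈ Finset.range (k + 1), b j
      = ∑' k : ℕ, ∑' j : ℕ, (if j ≤ k then r ^ k * b j else 0) := tsum_congr h1
    _ = ∑' j : ℕ, ∑' k : ℕ, (if j ≤ k then r ^ k * b j else 0) := ENNReal.tsum_comm
    _ = ∑' j : ℕ, (∑' k : ℕ, (if j ≤ k then r ^ k else 0)) * b j := by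
        refine tsum_congr fun j => ?_
        rw [← ENNReal.tsum_mul_right]
        refine tsum_congr fun k => ?_
        split_ifs <;> simp
    _ = ∑' j : ℕ, (r ^ j * ∑' m : ℕ, r ^ m) * b j := by
        refine tsum_congr fun j => ?_
        rw [tail_geom]
    _ = (∑' m : ℕ, r ^ m) * ∑' j : ℕ, r ^ j * b j := by
        rw [← ENNReal.tsum_mul_left]
        refine tsum_congr fun j => ?_
        ring
    _ ≤ (∑' m : ℕ, r ^ m) * ∑' j : ℕ, r ^ j * b j := le_rfl

variable {ℓ ε : ℝ}

lemma per_j (hf : LocallyIntegrable f volume) (hℓ : 0 < ℓ) (hε : 0 < ε) (j : ℕ) :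
    ENNReal.ofReal ((2:ℝ) ^ (-(j:ℝ) * ε)) * meanOsc f c (2 ^ j * ℓ)
      ≤ ENNReal.ofReal ((2:ℝ) ^ ((d:ℝ) + 2 + ε)) *
          ∫⁻ lam in Set.Ico ((2:ℝ) ^ j) ((2:ℝ) ^ (j + 1)),
            meanOsc f c (lam * ℓ) * ENNReal.ofReal (lam ^ (-(1:ℝ) - ε)) := by
  set osc := meanOsc f c (2 ^ j * ℓ) with hosc
  set K : ℝ≥0∞ := (ENNReal.ofReal ((2:ℝ) ^ (d + 1)))⁻¹ * osc
      * ENNReal.ofReal (((2:ℝ) ^ (j + 1)) ^ (-(1:ℝ) - ε)) with hK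
  have hpow1 : ENNReal.ofReal ((2:ℝ) ^ (d + 1)) ≠ 0 := by
    simp only [ne_eq, ENNReal.ofReal_eq_zero, not_le]
    positivity
  have hpow2 : ENNReal.ofReal ((2:ℝ) ^ (d + 1)) ≠ ⊤ := ENNReal.ofReal_ne_top
  -- pointwise bound on the interval
  have hpt : ∀ lam ∈ Set.Ico ((2:ℝ) ^ j) ((2:ℝ) ^ (j + 1)),
      K ≤ meanOsc f c (lam * ℓ) * ENNReal.ofReal (lam ^ (-(1:ℝ) - ε)) := by
    intro lam hlam
    obtain ⟨hl1, hl2⟩ := hlam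
    have hlampos : (0:ℝ) < lam := lt_of_lt_of_le (by positivity) hl1
    have h1 : (ENNReal.ofReal ((2:ℝ) ^ (d + 1)))⁻¹ * osc ≤ meanOsc f c (lam * ℓ) := by
      have hcomp := meanOsc_comp (c := c) hf (by positivity : (0:ℝ) < 2 ^ j * ℓ)
        (by nlinarith : (2:ℝ) ^ j * ℓ ≤ lam * ℓ)
      have hq : 2 * ((lam * ℓ) / ((2:ℝ) ^ j * ℓ)) ^ d ≤ (2:ℝ) ^ (d + 1) := by
        have hq1 : (lam * ℓ) / ((2:ℝ) ^ j * ℓ) ≤ 2 := by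
          rw [div_le_iff₀ (by positivity)]
          calc lam * ℓ ≤ (2:ℝ)^(j+1) * ℓ := by nlinarith
            _ = 2 * (2 ^ j * ℓ) := by ring
        calc 2 * ((lam * ℓ) / ((2:ℝ) ^ j * ℓ)) ^ d ≤ 2 * 2 ^ d := by
              gcongr
          _ = (2:ℝ) ^ (d + 1) := by ring
      have : osc ≤ ENNReal.ofReal ((2:ℝ) ^ (d + 1)) * meanOsc f c (lam * ℓ) := by
        refine hcomp.trans ?_
        gcongr
      calc (ENNReal.ofReal ((2:ℝ) ^ (d + 1)))⁻¹ * osc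
          ≤ (ENNReal.ofReal ((2:ℝ) ^ (d + 1)))⁻¹
            * (ENNReal.ofReal ((2:ℝ) ^ (d + 1)) * meanOsc f c (lam * ℓ)) := by gcongr
        _ = meanOsc f c (lam * ℓ) := by
            rw [← mul_assoc, ENNReal.inv_mul_cancel hpow1 hpow2, one_mul]
    have h2 : ENNReal.ofReal (((2:ℝ) ^ (j + 1)) ^ (-(1:ℝ) - ε))
        ≤ ENNReal.ofReal (lam ^ (-(1:ℝ) - ε)) := by
      apply ENNReal.ofReal_le_ofReal
      exact Real.rpow_le_rpow_of_nonpos hlampos hl2.le (by linarith)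
    rw [hK]
    exact mul_le_mul' h1 h2
  -- integral lower bound
  have hIlow : K * ENNReal.ofReal ((2:ℝ) ^ j)
      ≤ ∫⁻ lam in Set.Ico ((2:ℝ) ^ j) ((2:ℝ) ^ (j + 1)),
          meanOsc f c (lam * ℓ) * ENNReal.ofReal (lam ^ (-(1:ℝ) - ε)) := by
    have hvol : volume (Set.Ico ((2:ℝ) ^ j) ((2:ℝ) ^ (j + 1))) = ENNReal.ofReal ((2:ℝ) ^ j) := by
      rw [Real.volume_Ico]
      congr 1
      ring
    calc K * ENNReal.ofReal ((2:ℝ) ^ j)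
        = ∫⁻ _lam in Set.Ico ((2:ℝ) ^ j) ((2:ℝ) ^ (j + 1)), K := by
          rw [setLIntegral_const, hvol]
      _ ≤ _ := by
          apply lintegral_mono_ae
          rw [ae_restrict_iff' measurableSet_Ico]
          exact ae_of_all _ hpt
  refine le_trans ?_ (mul_le_mul_right hIlow (ENNReal.ofReal ((2:ℝ) ^ ((d:ℝ) + 2 + ε))))
  have hinv : (ENNReal.ofReal ((2:ℝ) ^ (d + 1)))⁻¹ = ENNReal.ofReal (((2:ℝ) ^ (d + 1))⁻¹) := by
    rw [ENNReal.ofReal_inv_of_pos (by positivity)]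
  have hconst : (2:ℝ) ^ ((d:ℝ) + 2 + ε) * ((((2:ℝ) ^ (d + 1))⁻¹)
      * (((2:ℝ) ^ (j + 1)) ^ (-(1:ℝ) - ε)) * ((2:ℝ) ^ j)) = (2:ℝ) ^ (-(j:ℝ) * ε) := by
    rw [← Real.rpow_natCast 2 (d + 1), ← Real.rpow_natCast 2 (j + 1), ← Real.rpow_natCast 2 j,
      ← Real.rpow_neg (by norm_num : (0:ℝ) ≤ 2),
      ← Real.rpow_mul (by norm_num : (0:ℝ) ≤ 2),
      ← Real.rpow_add (by norm_num : (0:ℝ) < 2),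
      ← Real.rpow_add (by norm_num : (0:ℝ) < 2),
      ← Real.rpow_add (by norm_num : (0:ℝ) < 2)]
    congr 1
    push_cast
    ring
  have hfinal : ENNReal.ofReal ((2:ℝ) ^ ((d:ℝ) + 2 + ε))
      * (ENNReal.ofReal (((2:ℝ) ^ (d + 1))⁻¹) * osc
          * ENNReal.ofReal (((2:ℝ) ^ (j + 1)) ^ (-(1:ℝ) - ε)) * ENNReal.ofReal ((2:ℝ) ^ j))
      = ENNReal.ofReal ((2:ℝ) ^ (-(j:ℝ) * ε)) * osc := by
    rw [← hconst, ENNReal.ofReal_mul (by positivity), ENNReal.ofReal_mul (by positivity),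
      ENNReal.ofReal_mul (by positivity)]
    ring
  rw [hK, hinv]
  exact le_of_eq hfinal.symm

lemma claimC (hf : LocallyIntegrable f volume) (hℓ : 0 < ℓ) (hε : 0 < ε) :
    ∑' j : ℕ, ENNReal.ofReal ((2:ℝ) ^ (-((j:ℝ) + 1) * ε)) * meanOsc f c (2 ^ (j + 1) * ℓ)
      ≤ ENNReal.ofReal ((2:ℝ) ^ ((d:ℝ) + 2 + ε)) *
          ∫⁻ lam in Set.Ioi (1:ℝ), meanOsc f c (lam * ℓ) * ENNReal.ofReal (lam ^ (-(1:ℝ) - ε)) := by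
  set I : ℕ → ℝ≥0∞ := fun j =>
    ∫⁻ lam in Set.Ico ((2:ℝ) ^ j) ((2:ℝ) ^ (j + 1)),
      meanOsc f c (lam * ℓ) * ENNReal.ofReal (lam ^ (-(1:ℝ) - ε)) with hI
  have hterm : ∀ j : ℕ, ENNReal.ofReal ((2:ℝ) ^ (-((j:ℝ) + 1) * ε)) * meanOsc f c (2 ^ (j + 1) * ℓ)
      ≤ ENNReal.ofReal ((2:ℝ) ^ ((d:ℝ) + 2 + ε)) * I (j + 1) := by
    intro j
    have := per_j (c := c) hf hℓ hε (j + 1)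
    have hcast : (-(((j:ℕ) + 1 : ℕ) : ℝ) * ε) = -((j:ℝ) + 1) * ε := by push_cast; ring
    rw [hcast] at this
    exact this
  rw [ENNReal.tsum_eq_iSup_sum]
  refine iSup_le fun s => ?_
  have hdisj : Set.PairwiseDisjoint (↑s)
      (fun j : ℕ => Set.Ico ((2:ℝ) ^ (j + 1)) ((2:ℝ) ^ (j + 2))) := by
    intro i _ j _ hij
    have key : ∀ a b : ℕ, a < b →
        Disjoint (Set.Ico ((2:ℝ) ^ (a + 1)) ((2:ℝ) ^ (a + 2)))
          (Set.Ico ((2:ℝ) ^ (b + 1)) ((2:ℝ) ^ (b + 2))) := by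
      intro a b hab
      apply Set.Ico_disjoint_Ico.mpr
      have : (2:ℝ) ^ (a + 2) ≤ (2:ℝ) ^ (b + 1) :=
        pow_le_pow_right₀ (by norm_num) (by omega)
      calc min ((2:ℝ) ^ (a + 2)) ((2:ℝ) ^ (b + 2)) ≤ (2:ℝ) ^ (a + 2) := min_le_left _ _
        _ ≤ (2:ℝ) ^ (b + 1) := this
        _ ≤ max ((2:ℝ) ^ (a + 1)) ((2:ℝ) ^ (b + 1)) := le_max_right _ _
    rcases hij.lt_or_gt with h | h
    · exact key i j h
    · exact (key j i h).symm
  have hsub : (⋃ j ∈ s, Set.Ico ((2:ℝ) ^ (j + 1)) ((2:ℝ) ^ (j + 2))) ⊆ Set.Ioi (1:ℝ) := by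
    intro x hx
    simp only [Set.mem_iUnion] at hx
    obtain ⟨j, _, hj1, _⟩ := hx
    have : (1:ℝ) < 2 ^ (j + 1) := one_lt_pow₀ (by norm_num) (by omega)
    exact lt_of_lt_of_le this hj1
  calc ∑ j ∈ s, ENNReal.ofReal ((2:ℝ) ^ (-((j:ℝ) + 1) * ε)) * meanOsc f c (2 ^ (j + 1) * ℓ)
      ≤ ∑ j ∈ s, ENNReal.ofReal ((2:ℝ) ^ ((d:ℝ) + 2 + ε)) * I (j + 1) :=
        Finset.sum_le_sum fun j _ => hterm j
    _ = ENNReal.ofReal ((2:ℝ) ^ ((d:ℝ) + 2 + ε)) * ∑ j ∈ s, I (j + 1) := by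
        rw [Finset.mul_sum]
    _ = ENNReal.ofReal ((2:ℝ) ^ ((d:ℝ) + 2 + ε)) *
          ∫⁻ lam in ⋃ j ∈ s, Set.Ico ((2:ℝ) ^ (j + 1)) ((2:ℝ) ^ (j + 2)),
            meanOsc f c (lam * ℓ) * ENNReal.ofReal (lam ^ (-(1:ℝ) - ε)) := by
        congr 1
        rw [lintegral_biUnion_finset hdisj (fun j _ => measurableSet_Ico)]
    _ ≤ _ := mul_le_mul_right (lintegral_mono_set hsub) _

lemma real_const_k {ℓ ε : ℝ} (hℓ : 0 < ℓ) (k : ℕ) :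
    ((2:ℝ) ^ (k + 1) * ℓ) ^ d * ((((2:ℝ) ^ k * ℓ / 2) ^ ((d:ℝ) + ε))⁻¹)
      = (4:ℝ) ^ d * 2 ^ ε * ℓ ^ (-ε) * ((2:ℝ) ^ (-ε)) ^ k := by
  have hp : (0:ℝ) < 2 ^ k * ℓ / 2 := by positivity
  rw [Real.rpow_add hp, Real.rpow_natCast, mul_inv]
  have h4 : ((2:ℝ) ^ (k + 1) * ℓ) ^ d * ((2 ^ k * ℓ / 2) ^ d)⁻¹ = (4:ℝ) ^ d := by
    rw [← div_eq_mul_inv, ← div_pow]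
    congr 1
    field_simp
    ring
  rw [← mul_assoc, h4]
  have h5 : ((2:ℝ) ^ k * ℓ / 2) ^ ε = ((2:ℝ) ^ ε) ^ k * (ℓ ^ ε / 2 ^ ε) := by
    rw [show (2:ℝ) ^ k * ℓ / 2 = (2:ℝ) ^ k * (ℓ / 2) by ring,
      Real.mul_rpow (by positivity) (by positivity),
      Real.div_rpow hℓ.le (by norm_num)]
    congr 1
    rw [← Real.rpow_natCast 2 k, ← Real.rpow_mul (by norm_num), mul_comm,
      Real.rpow_mul (by norm_num), Real.rpow_natCast]
  rw [h5]
  have h6 : ∀ x : ℝ, ((2:ℝ) ^ x)⁻¹ = (2:ℝ) ^ (-x) := fun x =>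
    (Real.rpow_neg (by norm_num) x).symm
  have h7 : (ℓ ^ ε)⁻¹ = ℓ ^ (-ε) := (Real.rpow_neg hℓ.le ε).symm
  rw [mul_inv, ← inv_pow, h6 ε, inv_div, div_eq_mul_inv, h7]
  ring

lemma mainLemma (f : Edge d → Vec M) (hf : LocallyIntegrable f volume)
    (c : Edge d) {ℓ ε : ℝ} (hℓ : 0 < ℓ) (hε : 0 < ε) :
    (∫⁻ y, (‖f y - cubeAvg f c ℓ‖₊ : ℝ≥0∞) /
        ENNReal.ofReal ((ℓ + dist c y) ^ ((d:ℝ) + ε)))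
      ≤ ENNReal.ofReal (((4:ℝ) ^ d * 2 ^ ε * ((2:ℝ) ^ d + 1) * (1 - (2:ℝ) ^ (-ε))⁻¹
            * 2 ^ ε * (2:ℝ) ^ ((d:ℝ) + 2 + ε)) * ℓ ^ (-ε)) *
          ∫⁻ lam in Set.Ioi (1:ℝ), meanOsc f c (lam * ℓ)
            * ENNReal.ofReal (lam ^ (-(1:ℝ) - ε)) := by
  classical
  set g₀ := cubeAvg f c ℓ with hg₀
  set F : Edge d → ℝ≥0∞ := fun y =>
    (‖f y - g₀‖₊ : ℝ≥0∞) / ENNReal.ofReal ((ℓ + dist c y) ^ ((d:ℝ) + ε)) with hF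
  set S : ℕ → Set (Edge d) := fun k => cube c (2 ^ k * ℓ) with hS
  set T : ℕ → Set (Edge d) := fun k => if k = 0 then S 1 else S (k + 1) \ S k with hT
  set b : ℕ → ℝ≥0∞ := fun j => meanOsc f c (2 ^ (j + 1) * ℓ) with hb
  set r : ℝ≥0∞ := ENNReal.ofReal ((2:ℝ) ^ (-ε)) with hr
  set A : ℝ≥0∞ := ENNReal.ofReal ((4:ℝ) ^ d * 2 ^ ε * ℓ ^ (-ε)) with hA
  set X₂ : ℝ≥0∞ := ENNReal.ofReal ((2:ℝ) ^ d) + 1 with hX₂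
  set I : ℝ≥0∞ := ∫⁻ lam in Set.Ioi (1:ℝ), meanOsc f c (lam * ℓ)
      * ENNReal.ofReal (lam ^ (-(1:ℝ) - ε)) with hI
  -- measurability of T
  have hTmeas : ∀ k, MeasurableSet (T k) := by
    intro k
    simp only [hT]
    split_ifs
    · exact measurableSet_cube c _
    · exact (measurableSet_cube c _).diff (measurableSet_cube c _)
  -- coverage
  have hcover : (⋃ k, T k) = Set.univ := by
    refine Set.eq_univ_of_forall fun y => ?_
    simp only [Set.mem_iUnion]
    by_cases h1 : y ∈ S 1
    · exact ⟨0, by simp [hT, h1]⟩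
    · have hex : ∃ m : ℕ, y ∈ S m := by
        obtain ⟨k, hk⟩ := exists_mem_cube c y hℓ
        exact ⟨k, hk⟩
      set m := Nat.find hex with hm
      have hmem : y ∈ S m := Nat.find_spec hex
      have hm2 : 2 ≤ m := by
        by_contra hlt
        push_neg at hlt
        interval_cases m
        · exact h1 (cube_subset c (by nlinarith : (2:ℝ) ^ 0 * ℓ ≤ 2 ^ 1 * ℓ) hmem)
        · exact h1 hmem
      refine ⟨m - 1, ?_⟩
      have hne : m - 1 ≠ 0 := by omega
      simp only [hT, hne, if_false]
      constructor
      · have : m - 1 + 1 = m := by omega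
        rw [this]; exact hmem
      · exact Nat.find_min hex (by omega)
  -- subset
  have hTsub : ∀ k, T k ⊆ S (k + 1) := by
    intro k
    simp only [hT]
    split_ifs with h
    · subst h; exact subset_rfl
    · exact Set.diff_subset.trans (subset_rfl)
  -- weight bound on T k
  have hweight : ∀ k, ∀ y ∈ T k, (2:ℝ) ^ k * ℓ / 2 ≤ ℓ + dist c y := by
    intro k y hy
    simp only [hT] at hy
    by_cases h : k = 0
    · subst h
      have := dist_nonneg (x := c) (y := y)
      simp only [pow_zero, one_mul]
      linarith
    · simp only [h, if_false] at hy
      have := dist_ge_of_not_mem_cube hy.2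
      linarith [dist_nonneg (x := c) (y := y)]
  -- ae-measurability
  have hmeas : AEMeasurable (fun y => (‖f y - g₀‖₊ : ℝ≥0∞)) volume :=
    (hf.aestronglyMeasurable.sub aestronglyMeasurable_const).enorm
  -- per-k bound
  have hTk : ∀ k : ℕ, (∫⁻ y in T k, F y)
      ≤ (A * X₂) * (r ^ k * ∑ j ∈ Finset.range (k + 1), b j) := by
    intro k
    have hwpos : (0:ℝ) < ((2:ℝ) ^ k * ℓ / 2) ^ ((d:ℝ) + ε) := by positivity
    have step1 : (∫⁻ y in T k, F y)
        ≤ (∫⁻ y in T k, (‖f y - g₀‖₊ : ℝ≥0∞))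
            * (ENNReal.ofReal (((2:ℝ) ^ k * ℓ / 2) ^ ((d:ℝ) + ε)))⁻¹ := by
      rw [← lintegral_mul_const'' _ (hmeas.restrict)]
      apply lintegral_mono_ae
      rw [ae_restrict_iff' (hTmeas k)]
      refine ae_of_all _ fun y hy => ?_
      simp only [hF]
      rw [div_eq_mul_inv]
      refine mul_le_mul_right ?_ _
      rw [ENNReal.inv_le_inv]
      exact ENNReal.ofReal_le_ofReal
        (Real.rpow_le_rpow (by positivity) (hweight k y hy) (by positivity))
    have step2 : (∫⁻ y in T k, (‖f y - g₀‖₊ : ℝ≥0∞))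
        ≤ ∫⁻ y in S (k + 1), (‖f y - g₀‖₊ : ℝ≥0∞) :=
      lintegral_mono_set (hTsub k)
    have step3 := Jk_le (c := c) hf hℓ (k := k + 1) (by omega)
    have hcoef : ENNReal.ofReal (((2:ℝ) ^ (k+1) * ℓ) ^ d)
        * (ENNReal.ofReal (((2:ℝ) ^ k * ℓ / 2) ^ ((d:ℝ) + ε)))⁻¹ = A * r ^ k := by
      rw [← ENNReal.ofReal_inv_of_pos hwpos,
        ← ENNReal.ofReal_mul (by positivity), real_const_k hℓ k,
        ENNReal.ofReal_mul (by positivity), ← ENNReal.ofReal_pow (by positivity)]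
    calc (∫⁻ y in T k, F y)
        ≤ (∫⁻ y in S (k + 1), (‖f y - g₀‖₊ : ℝ≥0∞))
            * (ENNReal.ofReal (((2:ℝ) ^ k * ℓ / 2) ^ ((d:ℝ) + ε)))⁻¹ :=
          step1.trans (mul_le_mul_left step2 _)
      _ ≤ (ENNReal.ofReal (((2:ℝ) ^ (k+1) * ℓ) ^ d) * X₂ * ∑ j ∈ Finset.range (k+1), b j)
            * (ENNReal.ofReal (((2:ℝ) ^ k * ℓ / 2) ^ ((d:ℝ) + ε)))⁻¹ :=
          mul_le_mul_left step3 _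
      _ = (ENNReal.ofReal (((2:ℝ) ^ (k+1) * ℓ) ^ d)
            * (ENNReal.ofReal (((2:ℝ) ^ k * ℓ / 2) ^ ((d:ℝ) + ε)))⁻¹)
            * X₂ * ∑ j ∈ Finset.range (k+1), b j := by ring
      _ = (A * r ^ k) * X₂ * ∑ j ∈ Finset.range (k+1), b j := by rw [hcoef]
      _ = (A * X₂) * (r ^ k * ∑ j ∈ Finset.range (k+1), b j) := by ring
  -- geometric sum
  have hrlt : (2:ℝ) ^ (-ε) < 1 :=
    Real.rpow_lt_one_of_one_lt_of_neg (by norm_num) (by linarith)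
  have hgeo : (∑' m : ℕ, r ^ m) = ENNReal.ofReal ((1 - (2:ℝ) ^ (-ε))⁻¹) := by
    rw [ENNReal.tsum_geometric, hr]
    rw [← ENNReal.ofReal_one, ← ENNReal.ofReal_sub _ (by positivity),
      ← ENNReal.ofReal_inv_of_pos (by linarith)]
  -- claimC reformulated
  have hsum2 : (∑' j : ℕ, r ^ j * b j)
      ≤ ENNReal.ofReal ((2:ℝ) ^ ε) * (ENNReal.ofReal ((2:ℝ) ^ ((d:ℝ) + 2 + ε)) * I) := by
    have hterm : ∀ j : ℕ, r ^ j * b j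
        = ENNReal.ofReal ((2:ℝ) ^ ε)
            * (ENNReal.ofReal ((2:ℝ) ^ (-((j:ℝ) + 1) * ε)) * b j) := by
      intro j
      rw [hr, ← ENNReal.ofReal_pow (by positivity), ← mul_assoc,
        ← ENNReal.ofReal_mul (by positivity)]
      congr 2
      rw [← Real.rpow_natCast ((2:ℝ) ^ (-ε)) j, ← Real.rpow_mul (by norm_num),
        ← Real.rpow_add (by norm_num : (0:ℝ) < 2)]
      congr 1
      ring
    calc (∑' j : ℕ, r ^ j * b j)
        = ENNReal.ofReal ((2:ℝ) ^ ε)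
            * ∑' j : ℕ, ENNReal.ofReal ((2:ℝ) ^ (-((j:ℝ) + 1) * ε)) * b j := by
          rw [← ENNReal.tsum_mul_left]
          exact tsum_congr hterm
      _ ≤ _ := mul_le_mul_right (claimC hf hℓ hε) _
  -- main chain
  calc (∫⁻ y, F y)
      = ∫⁻ y in ⋃ k, T k, F y := by rw [hcover, setLIntegral_univ]
    _ ≤ ∑' k : ℕ, ∫⁻ y in T k, F y := lintegral_iUnion_le T F
    _ ≤ ∑' k : ℕ, (A * X₂) * (r ^ k * ∑ j ∈ Finset.range (k + 1), b j) :=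
        ENNReal.tsum_le_tsum hTk
    _ = (A * X₂) * ∑' k : ℕ, r ^ k * ∑ j ∈ Finset.range (k + 1), b j :=
        ENNReal.tsum_mul_left
    _ ≤ (A * X₂) * ((∑' m : ℕ, r ^ m) * ∑' j : ℕ, r ^ j * b j) :=
        mul_le_mul_right (sum_swap_le b r) _
    _ ≤ (A * X₂) * (ENNReal.ofReal ((1 - (2:ℝ) ^ (-ε))⁻¹)
          * (ENNReal.ofReal ((2:ℝ) ^ ε) * (ENNReal.ofReal ((2:ℝ) ^ ((d:ℝ) + 2 + ε)) * I))) := by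
        rw [← hgeo]
        exact mul_le_mul_right (mul_le_mul_right hsum2 _) _
    _ = ENNReal.ofReal (((4:ℝ) ^ d * 2 ^ ε * ((2:ℝ) ^ d + 1) * (1 - (2:ℝ) ^ (-ε))⁻¹
          * 2 ^ ε * (2:ℝ) ^ ((d:ℝ) + 2 + ε)) * ℓ ^ (-ε)) * I := by
        have hX₂' : X₂ = ENNReal.ofReal ((2:ℝ) ^ d + 1) := by
          rw [hX₂, ENNReal.ofReal_add (by positivity) (by norm_num), ENNReal.ofReal_one]
        rw [hX₂', hA, ← ENNReal.ofReal_mul (by positivity : (0:ℝ) ≤ 4 ^ d * 2 ^ ε * ℓ ^ (-ε))]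
        have hpos1 : (0:ℝ) ≤ 1 - 2 ^ (-ε) := by linarith
        have hn1 : (0:ℝ) ≤ 4 ^ d * 2 ^ ε * ℓ ^ (-ε) * (2 ^ d + 1) := by positivity
        have hn2 : (0:ℝ) ≤ 4 ^ d * 2 ^ ε * ℓ ^ (-ε) * (2 ^ d + 1) * (1 - (2:ℝ) ^ (-ε))⁻¹ :=
          mul_nonneg hn1 (inv_nonneg.mpr hpos1)
        have hn3 : (0:ℝ) ≤ 4 ^ d * 2 ^ ε * ℓ ^ (-ε) * (2 ^ d + 1) * (1 - (2:ℝ) ^ (-ε))⁻¹ * 2 ^ ε :=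
          mul_nonneg hn2 (by positivity)
        calc ENNReal.ofReal ((4:ℝ) ^ d * 2 ^ ε * ℓ ^ (-ε) * (2 ^ d + 1)) *
              (ENNReal.ofReal ((1 - (2:ℝ) ^ (-ε))⁻¹) *
                (ENNReal.ofReal ((2:ℝ) ^ ε) * (ENNReal.ofReal ((2:ℝ) ^ ((d:ℝ) + 2 + ε)) * I)))
            = (ENNReal.ofReal ((4:ℝ) ^ d * 2 ^ ε * ℓ ^ (-ε) * (2 ^ d + 1)) *
                ENNReal.ofReal ((1 - (2:ℝ) ^ (-ε))⁻¹) *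
                ENNReal.ofReal ((2:ℝ) ^ ε) * ENNReal.ofReal ((2:ℝ) ^ ((d:ℝ) + 2 + ε))) * I := by
              ring
          _ = _ := by
              rw [← ENNReal.ofReal_mul hn1, ← ENNReal.ofReal_mul hn2, ← ENNReal.ofReal_mul hn3]
              congr 2
              ring

end Aux

theorem stmt9 (n M : ℕ) (hn : 2 ≤ n) (hM : 1 ≤ M) (ε : ℝ) (hε : 0 < ε) :
    ∃ C : ℝ, 0 < C ∧
      ∀ f : Edge (n - 1) → Vec M, LocallyIntegrable f volume →
        ∀ (c : Edge (n - 1)) (ℓ : ℝ), 0 < ℓ →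
          (∫⁻ y, (‖f y - cubeAvg f c ℓ‖₊ : ℝ≥0∞) /
              ENNReal.ofReal ((ℓ + dist c y) ^ ((n : ℝ) - 1 + ε)))
            ≤ ENNReal.ofReal (C * ℓ ^ (-ε)) *
              ∫⁻ lam in Set.Ioi (1 : ℝ),
                meanOsc f c (lam * ℓ) * ENNReal.ofReal (lam ^ (-(1 : ℝ) - ε)) := by

  have hrlt : (2:ℝ) ^ (-ε) < 1 :=
    Real.rpow_lt_one_of_one_lt_of_neg (by norm_num) (by linarith)
  have h1 : (0:ℝ) < 1 - 2 ^ (-ε) := by linarith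
  refine ⟨(4:ℝ) ^ (n-1) * 2 ^ ε * ((2:ℝ) ^ (n-1) + 1) * (1 - (2:ℝ) ^ (-ε))⁻¹
      * 2 ^ ε * (2:ℝ) ^ (((n-1 : ℕ):ℝ) + 2 + ε), ?_, ?_⟩
  · exact mul_pos (mul_pos (mul_pos
      (by positivity : (0:ℝ) < 4 ^ (n-1) * 2 ^ ε * ((2:ℝ) ^ (n-1) + 1))
      (inv_pos.mpr h1)) (by positivity)) (by positivity)
  · intro f hf c ℓ hℓ
    have hcast : (n:ℝ) - 1 = (((n - 1 : ℕ)):ℝ) := by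
      rw [Nat.cast_sub (by omega : 1 ≤ n), Nat.cast_one]
    simp only [hcast]
    exact mainLemma f hf c hℓ hε
end
end

section
/- Let n ≥ 2 and let φ : R^{n-1} → C^{M×M} be a matrix-valued function with differentiable entries such that for some C ∈ (0,∞) one has |φ(x')| + |∇φ(x')| ≤ C/(1 + |x'|^n) for every x' ∈ R^{n-1}. Let g : R^{n-1} → C^M be an essentially bounded measurable function with compact support satisfying ∫_{R^{n-1}} g(y') dy' = 0. Then there exists a constant C_g ∈ (0,∞), depending on g, such that sup over t > 0 of |(φ_t * g)(x')| ≤ C_g/(1 + |x'|^n) for every x' ∈ R^{n-1}. -/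
open MeasureTheory Filter Topology ENNReal

noncomputable section

lemma myaux_one_add_pow_le (a : ℝ) (ha : 0 ≤ a) (n : ℕ) :
    (1 + a) ^ n ≤ 2 ^ n * (1 + a ^ n) := by
  calc (1 + a) ^ n ≤ (2 * max 1 a) ^ n := by
        apply pow_le_pow_left₀ (by positivity)
        rcases le_total a 1 with h | h
        · rw [max_eq_left h]; linarith
        · rw [max_eq_right h]; linarith
    _ = 2 ^ n * (max 1 a) ^ n := by rw [mul_pow]
    _ ≤ 2 ^ n * (1 + a ^ n) := by
        gcongr
        rcases le_total a 1 with h | h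
        · rw [max_eq_left h, one_pow]; nlinarith [pow_nonneg ha n]
        · rw [max_eq_right h]; nlinarith [pow_nonneg ha n]

lemma myaux_integrable (d n : ℕ) (hdn : d < n) :
    Integrable (fun z : EuclideanSpace ℝ (Fin d) => (1 + ‖z‖ ^ n)⁻¹) volume := by
  have hfin : (Module.finrank ℝ (EuclideanSpace ℝ (Fin d)) : ℝ) < n := by
    rw [finrank_euclideanSpace_fin]; exact_mod_cast hdn
  have h := integrable_one_add_norm (E := EuclideanSpace ℝ (Fin d)) (μ := volume) hfin
  refine (h.const_mul ((2:ℝ) ^ n)).mono'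
    (Measurable.aestronglyMeasurable (by fun_prop)) ?_
  filter_upwards with z
  have h1 : (0:ℝ) < 1 + ‖z‖ ^ n := by positivity
  have h2 : (0:ℝ) < 1 + ‖z‖ := by positivity
  have key : (1 + ‖z‖) ^ n ≤ 2 ^ n * (1 + ‖z‖ ^ n) :=
    myaux_one_add_pow_le _ (norm_nonneg z) n
  rw [Real.norm_eq_abs, abs_of_pos (by positivity),
    ← Real.rpow_natCast (1 + ‖z‖) n] at *
  rw [show ((2:ℝ)^n * (1+‖z‖) ^ (-(n:ℝ))) = (2:ℝ)^n / (1+‖z‖) ^ (n:ℝ) by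
    rw [Real.rpow_neg h2.le]; ring]
  rw [inv_eq_one_div, div_le_div_iff₀ h1 (by positivity)]
  nlinarith [key]

set_option maxHeartbeats 1000000 in
set_option synthInstance.maxHeartbeats 400000 in
theorem stmt11 (n M : ℕ) (hn : 2 ≤ n) (hM : 1 ≤ M)
    (φ : Edge (n - 1) → (Vec M →L[ℂ] Vec M))
    (hφdiff : Differentiable ℝ φ)
    (C : ℝ) (hC : 0 < C)
    (hφ : ∀ x : Edge (n - 1), ‖φ x‖ + ‖fderiv ℝ φ x‖ ≤ C / (1 + ‖x‖ ^ n))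
    (g : Edge (n - 1) → Vec M)
    (hgm : AEStronglyMeasurable g volume)
    (hgb : ∃ K : ℝ, ∀ᵐ y : Edge (n - 1) ∂volume, ‖g y‖ ≤ K)
    (hgs : HasCompactSupport g)
    (hg0 : ∫ y, g y = 0) :
    ∃ Cg : ℝ, 0 < Cg ∧ ∀ t : ℝ, 0 < t → ∀ x : Edge (n - 1),
      ‖∫ y, (t ^ (n - 1) : ℝ)⁻¹ • (φ (t⁻¹ • (x - y))) (g y)‖ ≤ Cg / (1 + ‖x‖ ^ n) := by
  obtain ⟨K₀, hK₀⟩ := hgb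
  set K : ℝ := max K₀ 0 with hKdef
  have hK0 : 0 ≤ K := le_max_right _ _
  have hgK : ∀ᵐ y : Edge (n - 1) ∂volume, ‖g y‖ ≤ K :=
    hK₀.mono fun y h => h.trans (le_max_left _ _)
  obtain ⟨R₀, hR₀⟩ := hgs.isBounded.subset_closedBall 0
  set R : ℝ := max R₀ 1 with hRdef
  have hR1 : (1:ℝ) ≤ R := le_max_right _ _
  have hRsupp : tsupport g ⊆ Metric.closedBall 0 R :=
    hR₀.trans (Metric.closedBall_subset_closedBall (le_max_left _ _))
  -- basic norm bounds on φ
  have hφn : ∀ z, ‖φ z‖ ≤ C / (1 + ‖z‖ ^ n) :=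
    fun z => le_trans (le_add_of_nonneg_right (norm_nonneg (fderiv ℝ φ z))) (hφ z)
  have hφ'n : ∀ z, ‖fderiv ℝ φ z‖ ≤ C / (1 + ‖z‖ ^ n) :=
    fun z => le_trans (le_add_of_nonneg_left (norm_nonneg _)) (hφ z)
  have hφC : ∀ z, ‖φ z‖ ≤ C := by
    intro z
    refine (hφn z).trans (div_le_self hC.le ?_)
    nlinarith [pow_nonneg (norm_nonneg z) n]
  -- g is integrable
  have hgInt : Integrable g volume := by
    have hind : Integrable
        ((Metric.closedBall (0 : Edge (n-1)) R).indicator fun _ => K) volume := by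
      rw [integrable_indicator_iff measurableSet_closedBall]
      exact integrableOn_const (measure_closedBall_lt_top).ne
    refine hind.mono' hgm ?_
    filter_upwards [hgK] with y hy
    by_cases hy' : y ∈ tsupport g
    · rw [Set.indicator_of_mem (hRsupp hy')]; exact hy
    · rw [image_eq_zero_of_notMem_tsupport hy', norm_zero]
      exact Set.indicator_nonneg (fun _ _ => hK0) y
  have hG0 : (0:ℝ) ≤ ∫ y, ‖g y‖ := integral_nonneg fun y => norm_nonneg _
  set G : ℝ := ∫ y, ‖g y‖ with hGdef
  -- the integral A
  have hAint : Integrable (fun z : Edge (n-1) => (1 + ‖z‖ ^ n)⁻¹) volume :=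
    myaux_integrable (n-1) n (by omega)
  set A : ℝ := ∫ z : Edge (n-1), (1 + ‖z‖ ^ n)⁻¹ with hAdef
  have hA0 : 0 ≤ A := integral_nonneg fun z => by positivity
  -- constants
  set B₁ : ℝ := K * C * A * (1 + (2*R)^n) with hB₁
  set B₂ : ℝ := C * 2^n * R * G * 2 with hB₂
  refine ⟨|B₁| + |B₂| + 1, by positivity, ?_⟩
  intro t ht x
  have htn : (0:ℝ) < t ^ (n-1) := by positivity
  have hden : (0:ℝ) < 1 + ‖x‖ ^ n := by positivity
  -- measurability and integrability of the integrand
  have hmeas : ∀ s : ℝ, ∀ w : Edge (n-1),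
      AEStronglyMeasurable (fun y => (φ (s • (w - y))) (g y)) volume := by
    intro s w
    have h1 : Continuous fun y : Edge (n-1) => φ (s • (w - y)) :=
      hφdiff.continuous.comp ((continuous_const.sub continuous_id).const_smul s)
    exact isBoundedBilinearMap_apply.continuous.comp_aestronglyMeasurable
      (h1.aestronglyMeasurable.prodMk hgm)
  have hIntf : ∀ s : ℝ, ∀ w : Edge (n-1),
      Integrable (fun y => (φ (s • (w - y))) (g y)) volume := by
    intro s w
    refine (hgInt.norm.const_mul C).mono' (hmeas s w) ?_
    filter_upwards with y
    calc ‖(φ (s • (w - y))) (g y)‖ ≤ ‖φ (s • (w - y))‖ * ‖g y‖ :=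
          ContinuousLinearMap.le_opNorm _ _
      _ ≤ C * ‖g y‖ := by gcongr; exact hφC _
  have hIntF : Integrable
      (fun y => (t ^ (n-1) : ℝ)⁻¹ • (φ (t⁻¹ • (x - y))) (g y)) volume :=
    (hIntf t⁻¹ x).smul ((t ^ (n-1) : ℝ)⁻¹)
  by_cases hx : ‖x‖ ≤ 2*R
  · -- small x : uniform bound K*C*A
    have hbint : Integrable
        (fun y : Edge (n-1) => K * C * ((t^(n-1):ℝ)⁻¹ * (1 + ‖t⁻¹ • (x - y)‖ ^ n)⁻¹))
        volume := by
      have h1 : Integrable (fun y : Edge (n-1) => (1 + ‖t⁻¹ • y‖ ^ n)⁻¹) volume :=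
        hAint.comp_smul (inv_ne_zero ht.ne')
      have h2 : Integrable (fun y : Edge (n-1) => (1 + ‖t⁻¹ • (x - y)‖ ^ n)⁻¹) volume :=
        h1.comp_sub_left x
      exact (h2.const_mul _).const_mul _
    have hle : ∀ᵐ y ∂(volume : Measure (Edge (n-1))),
        ‖(t ^ (n-1) : ℝ)⁻¹ • (φ (t⁻¹ • (x - y))) (g y)‖ ≤
          K * C * ((t^(n-1):ℝ)⁻¹ * (1 + ‖t⁻¹ • (x - y)‖ ^ n)⁻¹) := by
      filter_upwards [hgK] with y hy
      rw [norm_smul, Real.norm_eq_abs, abs_of_pos (by positivity)]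
      calc (t^(n-1):ℝ)⁻¹ * ‖(φ (t⁻¹ • (x - y))) (g y)‖
          ≤ (t^(n-1):ℝ)⁻¹ * ((C / (1 + ‖t⁻¹ • (x - y)‖ ^ n)) * K) := by
            gcongr
            calc ‖(φ (t⁻¹ • (x - y))) (g y)‖ ≤ ‖φ (t⁻¹ • (x - y))‖ * ‖g y‖ :=
                  ContinuousLinearMap.le_opNorm _ _
              _ ≤ (C / (1 + ‖t⁻¹ • (x - y)‖ ^ n)) * K := by
                  have := hφn (t⁻¹ • (x - y))
                  have h3 : (0:ℝ) < 1 + ‖t⁻¹ • (x - y)‖ ^ n := by positivity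
                  exact mul_le_mul this hy (norm_nonneg _) (by positivity)
        _ = K * C * ((t^(n-1):ℝ)⁻¹ * (1 + ‖t⁻¹ • (x - y)‖ ^ n)⁻¹) := by
            rw [div_eq_mul_inv]; ring
    have hval : (∫ y : Edge (n-1), K * C * ((t^(n-1):ℝ)⁻¹ * (1 + ‖t⁻¹ • (x - y)‖ ^ n)⁻¹))
        = K * C * A := by
      simp_rw [show ∀ y : Edge (n-1),
          K * C * ((t^(n-1):ℝ)⁻¹ * (1 + ‖t⁻¹ • (x - y)‖ ^ n)⁻¹)
            = (K * C * (t^(n-1):ℝ)⁻¹) * (1 + ‖t⁻¹ • (x - y)‖ ^ n)⁻¹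
          from fun y => by ring]
      rw [integral_const_mul]
      have h2 : (∫ y : Edge (n-1), (1 + ‖t⁻¹ • (x - y)‖ ^ n)⁻¹)
          = ∫ y : Edge (n-1), (1 + ‖t⁻¹ • y‖ ^ n)⁻¹ :=
        integral_sub_left_eq_self (fun y : Edge (n-1) => (1 + ‖t⁻¹ • y‖ ^ n)⁻¹) volume x
      have h3 : (∫ y : Edge (n-1), (1 + ‖t⁻¹ • y‖ ^ n)⁻¹)
          = |t ^ Module.finrank ℝ (Edge (n-1))| • A :=
        Measure.integral_comp_inv_smul volume (fun z : Edge (n-1) => (1 + ‖z‖ ^ n)⁻¹) t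
      rw [h2, h3, finrank_euclideanSpace_fin, smul_eq_mul,
        abs_of_pos (by positivity : (0:ℝ) < t ^ (n-1))]
      field_simp
    calc ‖∫ y, (t ^ (n-1) : ℝ)⁻¹ • (φ (t⁻¹ • (x - y))) (g y)‖
        ≤ ∫ y : Edge (n-1), K * C * ((t^(n-1):ℝ)⁻¹ * (1 + ‖t⁻¹ • (x - y)‖ ^ n)⁻¹) :=
          norm_integral_le_of_norm_le hbint hle
      _ = K * C * A := hval
      _ ≤ B₁ / (1 + ‖x‖ ^ n) := by
          rw [le_div_iff₀ hden, hB₁]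
          have hxp : ‖x‖ ^ n ≤ (2*R)^n :=
            pow_le_pow_left₀ (norm_nonneg x) hx n
          nlinarith [mul_nonneg (mul_nonneg hK0 hC.le) hA0]
      _ ≤ (|B₁| + |B₂| + 1) / (1 + ‖x‖ ^ n) := by
          gcongr
          have := le_abs_self B₁
          have := abs_nonneg B₂
          linarith
  · -- large x : use cancellation
    push_neg at hx
    have hx2 : (2:ℝ) < ‖x‖ := by nlinarith
    have hxn0 : (0:ℝ) < ‖x‖ := by linarith
    have hxn1 : (1:ℝ) ≤ ‖x‖ ^ n := one_le_pow₀ (by linarith)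
    have hxpow : (0:ℝ) < ‖x‖ ^ n := by positivity
    have hInth : Integrable (fun y => (t ^ (n-1) : ℝ)⁻¹ • (φ (t⁻¹ • x)) (g y)) volume :=
      ((φ (t⁻¹ • x)).integrable_comp hgInt).smul ((t ^ (n-1) : ℝ)⁻¹)
    have h0 : (∫ y, (t ^ (n-1) : ℝ)⁻¹ • (φ (t⁻¹ • x)) (g y)) = 0 := by
      rw [integral_smul, ContinuousLinearMap.integral_comp_comm _ hgInt, hg0, map_zero,
        smul_zero]
    have heq : (∫ y, (t ^ (n-1) : ℝ)⁻¹ • (φ (t⁻¹ • (x - y))) (g y))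
        = ∫ y, ((t ^ (n-1) : ℝ)⁻¹ • (φ (t⁻¹ • (x - y))) (g y)
            - (t ^ (n-1) : ℝ)⁻¹ • (φ (t⁻¹ • x)) (g y)) := by
      rw [integral_sub hIntF hInth, h0, sub_zero]
    have hptwise : ∀ y : Edge (n-1),
        ‖(t ^ (n-1) : ℝ)⁻¹ • (φ (t⁻¹ • (x - y))) (g y)
          - (t ^ (n-1) : ℝ)⁻¹ • (φ (t⁻¹ • x)) (g y)‖
        ≤ (C * 2^n * R / ‖x‖ ^ n) * ‖g y‖ := by
      intro y
      by_cases hy : y ∈ tsupport g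
      · have hyR : ‖y‖ ≤ R := by
          have := hRsupp hy
          simpa [Metric.mem_closedBall, dist_zero_right] using this
        have hseg : ∀ z ∈ segment ℝ (t⁻¹ • x) (t⁻¹ • (x - y)),
            ‖fderiv ℝ φ z‖ ≤ C * (2*t)^n / ‖x‖ ^ n := by
          intro z hz
          obtain ⟨a, b, ha, hb, hab, rfl⟩ := hz
          have ha' : a = 1 - b := by linarith
          subst ha'
          have hb1 : b ≤ 1 := by linarith
          have hz2 : ‖x‖ / (2*t) ≤ ‖(1-b) • (t⁻¹ • x) + b • (t⁻¹ • (x - y))‖ := by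
            have hrw : (1-b) • (t⁻¹ • x) + b • (t⁻¹ • (x - y))
                = t⁻¹ • x - b • (t⁻¹ • y) := by module
            rw [hrw]
            have h5 : ‖t⁻¹ • x‖ - ‖b • (t⁻¹ • y)‖ ≤ ‖t⁻¹ • x - b • (t⁻¹ • y)‖ :=
              norm_sub_norm_le _ _
            have h6 : ‖t⁻¹ • x‖ = t⁻¹ * ‖x‖ := by
              rw [norm_smul, Real.norm_eq_abs, abs_of_pos (by positivity)]
            have h7 : ‖b • (t⁻¹ • y)‖ ≤ t⁻¹ * R := by
              rw [norm_smul, norm_smul, Real.norm_eq_abs, Real.norm_eq_abs,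
                abs_of_nonneg hb, abs_of_pos (by positivity : (0:ℝ) < t⁻¹)]
              calc b * (t⁻¹ * ‖y‖) ≤ 1 * (t⁻¹ * R) := by
                    apply mul_le_mul hb1 ?_ (by positivity) zero_le_one
                    gcongr
                _ = t⁻¹ * R := one_mul _
            have h8 : ‖x‖/(2*t) ≤ t⁻¹ * ‖x‖ - t⁻¹ * R := by
              rw [div_le_iff₀ (by positivity)]
              have ht' : t⁻¹ * t = 1 := inv_mul_cancel₀ ht.ne'
              nlinarith
            linarith
          refine (hφ'n _).trans ?_
          have hzpos : (0:ℝ) < ‖x‖/(2*t) := by positivity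
          have h10 : C / (1 + ‖(1-b) • (t⁻¹ • x) + b • (t⁻¹ • (x - y))‖^n)
              ≤ C / ((‖x‖/(2*t))^n) := by
            apply div_le_div_of_nonneg_left hC.le (by positivity)
            have := pow_le_pow_left₀ hzpos.le hz2 n
            nlinarith [pow_nonneg (norm_nonneg
              ((1-b) • (t⁻¹ • x) + b • (t⁻¹ • (x - y)))) n]
          refine h10.trans (le_of_eq ?_)
          rw [div_pow, div_div_eq_mul_div, mul_pow]
        have hmvt := (convex_segment (t⁻¹ • x) (t⁻¹ • (x - y))).norm_image_sub_le_of_norm_fderiv_le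
          (fun z _ => hφdiff z) hseg (left_mem_segment ℝ _ _) (right_mem_segment ℝ _ _)
        have hdiffnorm : ‖t⁻¹ • (x - y) - t⁻¹ • x‖ ≤ t⁻¹ * R := by
          have hrw : t⁻¹ • (x - y) - t⁻¹ • x = -(t⁻¹ • y) := by module
          rw [hrw, norm_neg, norm_smul, Real.norm_eq_abs, abs_of_pos (by positivity)]
          gcongr
        have hop : ‖φ (t⁻¹ • (x - y)) - φ (t⁻¹ • x)‖
            ≤ C*(2*t)^n/‖x‖^n * (t⁻¹ * R) :=
          hmvt.trans (mul_le_mul_of_nonneg_left hdiffnorm (by positivity))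
        have htn' : t ^ n = t ^ (n-1) * t := by
          rw [← pow_succ, Nat.sub_add_cancel (by omega)]
        calc ‖(t ^ (n-1) : ℝ)⁻¹ • (φ (t⁻¹ • (x - y))) (g y)
              - (t ^ (n-1) : ℝ)⁻¹ • (φ (t⁻¹ • x)) (g y)‖
            = (t ^ (n-1) : ℝ)⁻¹ * ‖(φ (t⁻¹ • (x - y)) - φ (t⁻¹ • x)) (g y)‖ := by
              rw [← smul_sub, norm_smul, Real.norm_eq_abs, abs_of_pos (by positivity)]
              simp [ContinuousLinearMap.sub_apply]
          _ ≤ (t ^ (n-1) : ℝ)⁻¹ * (‖φ (t⁻¹ • (x - y)) - φ (t⁻¹ • x)‖ * ‖g y‖) := by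
              gcongr
              exact ContinuousLinearMap.le_opNorm _ _
          _ ≤ (t ^ (n-1) : ℝ)⁻¹ * ((C*(2*t)^n/‖x‖^n * (t⁻¹ * R)) * ‖g y‖) := by
              gcongr
          _ = (C * 2^n * R / ‖x‖ ^ n) * ‖g y‖ := by
              rw [mul_pow, htn']
              field_simp
      · simp [image_eq_zero_of_notMem_tsupport hy]
    rw [heq]
    refine le_trans (norm_integral_le_of_norm_le ((hgInt.norm).const_mul _)
      (Eventually.of_forall hptwise)) ?_
    rw [integral_const_mul]
    have hP : (0:ℝ) ≤ C * 2^n * R * G := by positivity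
    calc (C * 2^n * R / ‖x‖ ^ n) * G ≤ B₂ / (1 + ‖x‖ ^ n) := by
          rw [hB₂, div_mul_eq_mul_div, div_le_div_iff₀ hxpow hden]
          nlinarith [mul_nonneg hP (sub_nonneg.2 hxn1)]
      _ ≤ (|B₁| + |B₂| + 1) / (1 + ‖x‖ ^ n) := by
          gcongr
          have := le_abs_self B₂
          have := abs_nonneg B₁
          linarith
end
end
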